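/- arXiv:math/0608610 — 4 statements merged into one kernel-verified Lean document; each statement's English description precedes it below -/
import Mathlib

section
/- If S is a set of n points in general position whose convex hull is a triangle with vertices p, q, r, then by rotating a ray around each of p, q, r one finds that S has exactly three 0-edges and, for every 1 ≤ j < (n-2)/2, exactly six j-edges incident to p, q, or r; hence the number of (≤k)-edges of S incident to a convex hull vertex is exactly 3 + 6k for 1 ≤ k < (n-2)/2. -/
/-!
Seen from a hull vertex `v`, the other `n - 1` points lie in an open half-plane, so they are
totally ordered by angle around `v`, and `x ↦ sideCount S v x` strictly decreases along that
order: it is a bijection onto `{0, …, n - 2}`. Since `sideCount S v x + sideCount S x v = n - 2`,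
the `j`-edges at `v` are the two edges to the points of side counts `j` and `n - 2 - j`.
Both endpoints of a `0`-edge are hull vertices, so for a triangle the `0`-edges are its three
sides, and for `1 ≤ j < (n - 2) / 2` no `j`-edge joins two hull vertices: the `j`-edges at
`p`, `q`, `r` are `3 · 2 = 6` distinct edges.
-/

open Finset
open scoped Classical

abbrev Pt : Type := ℝ × ℝ

/-- Twice the signed area of the triangle `a b c`; its sign is the orientation. -/
noncomputable def det3 (a b c : Pt) : ℝ :=
  (b.1 - a.1) * (c.2 - a.2) - (b.2 - a.2) * (c.1 - a.1)

/-- `S` is in general position: no three of its points are collinear. -/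
def GenPos (S : Finset Pt) : Prop :=
  ∀ a ∈ S, ∀ b ∈ S, ∀ c ∈ S, a ≠ b → a ≠ c → b ≠ c → det3 a b c ≠ 0

/-- A finite point set is in convex position. -/
def ConvexPos (Q : Finset Pt) : Prop :=
  ∀ x ∈ Q, x ∉ convexHull ℝ (↑(Q.erase x) : Set Pt)

/-- `crN S` : the number of 4-element subsets of `S` in convex position. -/
noncomputable def crN (S : Finset Pt) : ℕ :=
  ((S.powersetCard 4).filter ConvexPos).card

/-- Number of points of `S` strictly to the left of the directed line `p → q`. -/
noncomputable def sideCount (S : Finset Pt) (p q : Pt) : ℕ :=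
  (S.filter (fun x => 0 < det3 p q x)).card

/-- `{p, q}` is a `j`-edge of `S`: exactly `j` points of `S` lie in one of the open
half-planes bounded by the line through `p` and `q`. -/
def IsJEdge (S : Finset Pt) (j : ℕ) (p q : Pt) : Prop :=
  p ∈ S ∧ q ∈ S ∧ p ≠ q ∧ (sideCount S p q = j ∨ sideCount S q p = j)

/-- `ej S j` : the number of (unordered) `j`-edges of `S`. -/
noncomputable def ej (S : Finset Pt) (j : ℕ) : ℕ :=
  ((S.powersetCard 2).filter (fun e => ∃ p q : Pt, e = {p, q} ∧ IsJEdge S j p q)).card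

/-- `Ek S k` : the number of `(≤ k)`-edges of `S`. -/
noncomputable def Ek (S : Finset Pt) (k : ℕ) : ℕ :=
  ((S.powersetCard 2).filter
    (fun e => ∃ p q : Pt, e = {p, q} ∧ ∃ j ≤ k, IsJEdge S j p q)).card

/-- The vertices of the convex hull of `S` (its extreme points). -/
noncomputable def hullVertices (S : Finset Pt) : Finset Pt :=
  S.filter (fun x => x ∉ convexHull ℝ (↑(S.erase x) : Set Pt))

/-- Number of `j`-edges of `S` incident to some point of `A`. -/
noncomputable def ejInc (S A : Finset Pt) (j : ℕ) : ℕ :=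
  ((S.powersetCard 2).filter
    (fun e => (∃ p q : Pt, e = {p, q} ∧ IsJEdge S j p q) ∧ (e ∩ A).Nonempty)).card

lemma det3_swap_left (a b c : Pt) : det3 b a c = -det3 a b c := by unfold det3; ring

lemma det3_swap_right (a b c : Pt) : det3 a c b = -det3 a b c := by unfold det3; ring

lemma det3_self_right (a b : Pt) : det3 a b b = 0 := by unfold det3; ring

lemma det3_self_apex (a b : Pt) : det3 a b a = 0 := by unfold det3; ring

lemma det3_sum_smul (a b : Pt) (t : Finset Pt) (w : Pt → ℝ) (hw : ∑ y ∈ t, w y = 1) :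
    det3 a b (∑ y ∈ t, w y • y) = ∑ y ∈ t, w y * det3 a b y := by
  simp only [det3, Prod.fst_sum, Prod.snd_sum, Prod.smul_fst, Prod.smul_snd, smul_eq_mul]
  have h : ∀ y : Pt, w y * ((b.1 - a.1) * (y.2 - a.2) - (b.2 - a.2) * (y.1 - a.1)) =
      (b.1 - a.1) * (w y * y.2) - (b.2 - a.2) * (w y * y.1)
        - ((b.1 - a.1) * a.2 - (b.2 - a.2) * a.1) * w y := fun y => by ring
  simp only [h, sum_sub_distrib, ← mul_sum, hw]
  ring

lemma det3_smul_add_det3_smul (v x y z : Pt) :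
    det3 v x y • (z - v) + det3 v y z • (x - v) = det3 v x z • (y - v) := by
  ext <;> simp only [det3, Prod.fst_add, Prod.snd_add, Prod.smul_fst, Prod.smul_snd,
    Prod.fst_sub, Prod.snd_sub, smul_eq_mul] <;> ring

lemma det3_pos_trans (f : Pt →L[ℝ] ℝ) {v x y z : Pt} (hx : f v < f x) (hy : f v < f y)
    (hz : f v < f z) (hxy : 0 < det3 v x y) (hyz : 0 < det3 v y z) : 0 < det3 v x z := by
  have key := congrArg f (det3_smul_add_det3_smul v x y z)
  simp only [map_add, map_smul, map_sub, smul_eq_mul] at key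
  have : 0 < det3 v x z * (f y - f v) := by
    rw [← key]; nlinarith [mul_pos hxy (sub_pos.2 hz), mul_pos hyz (sub_pos.2 hx)]
  exact pos_of_mul_pos_left this (sub_pos.2 hy).le

lemma sideCount_eq_card_filter_erase (S : Finset Pt) (a b : Pt) :
    sideCount S a b = (((S.erase a).erase b).filter (fun x => 0 < det3 a b x)).card := by
  rw [sideCount, filter_erase, filter_erase, erase_eq_of_notMem, erase_eq_of_notMem]
  · simp [det3_self_apex]
  · simp [det3_self_right]

section

variable {S : Finset Pt} {a b v x y : Pt} {j : ℕ}

lemma sideCount_add_sideCount (hgp : GenPos S) (ha : a ∈ S)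
    (hb : b ∈ S) (hab : a ≠ b) : sideCount S a b + sideCount S b a = S.card - 2 := by
  set U := (S.erase a).erase b
  have hU : U.card = S.card - 2 := by
    rw [card_erase_of_mem (mem_erase.2 ⟨hab.symm, hb⟩), card_erase_of_mem ha]; omega
  have hflip : U.filter (fun x => 0 < det3 b a x) = U.filter (fun x => ¬ 0 < det3 a b x) := by
    refine filter_congr fun x hx => ?_
    obtain ⟨hxb, hxa, hxS⟩ : x ≠ b ∧ x ≠ a ∧ x ∈ S := by simpa [U] using hx
    have hne := hgp a ha b hb x hxS hab hxa.symm hxb.symm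
    rw [det3_swap_left]
    constructor <;> intro h <;> [linarith; exact neg_pos.2 (lt_of_le_of_ne (not_lt.1 h) hne)]
  rw [sideCount_eq_card_filter_erase, sideCount_eq_card_filter_erase S b a,
    erase_right_comm (a := b), hflip, card_filter_add_card_filter_not, hU]

lemma exists_forall_lt_of_mem_hullVertices (hv : v ∈ hullVertices S) :
    ∃ f : Pt →L[ℝ] ℝ, ∀ x ∈ S.erase v, f v < f x := by
  obtain ⟨f, u, hfv, hf⟩ := geometric_hahn_banach_point_closed (convex_convexHull ℝ _)
    ((S.erase v).finite_toSet.isClosed_convexHull (𝕜 := ℝ)) (mem_filter.1 hv).2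
  exact ⟨f, fun x hx => hfv.trans (hf x (subset_convexHull ℝ _ (mem_coe.2 hx)))⟩

lemma sideCount_lt_of_det3_pos (hv : v ∈ hullVertices S)
    (hx : x ∈ S.erase v) (hy : y ∈ S.erase v) (h : 0 < det3 v x y) :
    sideCount S v y < sideCount S v x := by
  obtain ⟨f, hf⟩ := exists_forall_lt_of_mem_hullVertices hv
  have hsub : insert y (S.filter (fun z => 0 < det3 v y z)) ⊆
      S.filter (fun z => 0 < det3 v x z) := by
    intro z hz
    rcases mem_insert.1 hz with rfl | hz
    · exact mem_filter.2 ⟨mem_of_mem_erase hy, h⟩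
    obtain ⟨hzS, hyz⟩ := mem_filter.1 hz
    have hzv : z ≠ v := by rintro rfl; simp [det3_self_apex] at hyz
    exact mem_filter.2 ⟨hzS,
      det3_pos_trans f (hf x hx) (hf y hy) (hf z (mem_erase.2 ⟨hzv, hzS⟩)) h hyz⟩
  have hy' : y ∉ S.filter (fun z => 0 < det3 v y z) := by simp [det3_self_right]
  have := card_le_card hsub
  rw [card_insert_of_notMem hy'] at this
  exact this

lemma sideCount_injOn (hgp : GenPos S) (hv : v ∈ hullVertices S) :
    Set.InjOn (sideCount S v) (S.erase v) := by
  intro x hx y hy hxy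
  rw [mem_coe] at hx hy
  by_contra hne
  have hd := hgp v (mem_filter.1 hv).1 x (mem_of_mem_erase hx) y (mem_of_mem_erase hy)
    (ne_of_mem_erase hx).symm (ne_of_mem_erase hy).symm hne
  rcases hd.lt_or_gt with h | h
  · have := sideCount_lt_of_det3_pos hv hy hx (by rw [det3_swap_right]; linarith)
    omega
  · have := sideCount_lt_of_det3_pos hv hx hy h
    omega

lemma image_sideCount_eq_range (hgp : GenPos S) (hv : v ∈ hullVertices S) :
    (S.erase v).image (sideCount S v) = range (S.card - 1) := by
  have hvS := (mem_filter.1 hv).1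
  refine eq_of_subset_of_card_le (fun j hj => ?_) ?_
  · obtain ⟨x, hx, rfl⟩ := mem_image.1 hj
    have := sideCount_add_sideCount hgp hvS (mem_of_mem_erase hx) (ne_of_mem_erase hx).symm
    have := card_pos.2 ⟨x, hx⟩
    rw [card_erase_of_mem hvS] at this
    exact mem_range.2 (by omega)
  · rw [card_range, card_image_of_injOn (sideCount_injOn hgp hv), card_erase_of_mem hvS]

lemma card_filter_sideCount_mem (hgp : GenPos S) (hv : v ∈ hullVertices S) {T : Finset ℕ}
    (hT : T ⊆ range (S.card - 1)) :
    ((S.erase v).filter (fun x => sideCount S v x ∈ T)).card = T.card := by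
  rw [← card_image_of_injOn ((sideCount_injOn hgp hv).mono (coe_subset.2 (filter_subset _ _))),
    ← filter_image (p := (· ∈ T)), image_sideCount_eq_range hgp hv, filter_mem_eq_inter,
    inter_eq_right.2 hT]

lemma card_filter_isJEdge (hgp : GenPos S) (hv : v ∈ hullVertices S)
    (hj : j + 2 ≤ S.card) (hj' : 2 * j + 2 ≠ S.card) :
    (S.filter (IsJEdge S j v)).card = 2 := by
  have hvS := (mem_filter.1 hv).1
  have : S.filter (IsJEdge S j v) =
      (S.erase v).filter (fun x => sideCount S v x ∈ ({j, S.card - 2 - j} : Finset ℕ)) := by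
    ext x
    simp only [mem_filter, mem_erase, IsJEdge, mem_insert, mem_singleton]
    constructor
    · rintro ⟨hxS, -, -, hvx, h⟩
      have := sideCount_add_sideCount hgp hvS hxS hvx
      exact ⟨⟨hvx.symm, hxS⟩, by omega⟩
    · rintro ⟨⟨hxv, hxS⟩, h⟩
      have := sideCount_add_sideCount hgp hvS hxS hxv.symm
      exact ⟨hxS, hvS, hxS, hxv.symm, by omega⟩
  rw [this, card_filter_sideCount_mem hgp hv, card_pair (by omega)]
  intro i
  simp only [mem_insert, mem_singleton, mem_range]
  omega

lemma eq_of_mem_convexHull_of_det3_neg {c w₀ : Pt} {t : Finset Pt} (hw₀t : w₀ ∈ t)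
    (hw₀ : det3 a b w₀ ≤ 0) (hneg : ∀ y ∈ t, y ≠ w₀ → det3 a b y < 0) (hc : det3 a b c = 0)
    (hmem : c ∈ convexHull ℝ (t : Set Pt)) : c = w₀ := by
  rw [Finset.convexHull_eq] at hmem
  obtain ⟨w, hw_nonneg, hw_sum, hwc⟩ := hmem
  rw [centerMass_eq_of_sum_1 _ _ hw_sum] at hwc
  simp only [id] at hwc
  have hterm : ∀ y ∈ t, w y * det3 a b y ≤ 0 := fun y hy => by
    rcases eq_or_ne y w₀ with rfl | hne
    · exact mul_nonpos_of_nonneg_of_nonpos (hw_nonneg y hy) hw₀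
    · exact mul_nonpos_of_nonneg_of_nonpos (hw_nonneg y hy) (hneg y hy hne).le
  have hsum : ∑ y ∈ t, w y * det3 a b y = 0 := by rw [← det3_sum_smul a b t w hw_sum, hwc, hc]
  have hzero : ∀ y ∈ t, y ≠ w₀ → w y = 0 := fun y hy hne =>
    (mul_eq_zero.1 ((sum_eq_zero_iff_of_nonpos hterm).1 hsum y hy)).resolve_right
      (hneg y hy hne).ne
  have hw₀_one : w w₀ = 1 := by
    rw [← hw_sum, sum_eq_single_of_mem w₀ hw₀t hzero]
  rw [← hwc, sum_eq_single_of_mem w₀ hw₀t (fun y hy hne => by rw [hzero y hy hne, zero_smul]),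
    hw₀_one, one_smul]

lemma mem_hullVertices_of_sideCount_eq_zero (hgp : GenPos S)
    (ha : a ∈ S) (hb : b ∈ S) (hab : a ≠ b) (h0 : sideCount S a b = 0) :
    a ∈ hullVertices S ∧ b ∈ hullVertices S := by
  have hneg : ∀ y ∈ S, y ≠ a → y ≠ b → det3 a b y < 0 := fun y hy hya hyb =>
    lt_of_le_of_ne (not_lt.1 (filter_eq_empty_iff.1 (card_eq_zero.1 h0) hy))
      (hgp a ha b hb y hy hab hya.symm hyb.symm)
  refine ⟨mem_filter.2 ⟨ha, fun hmem => hab ?_⟩, mem_filter.2 ⟨hb, fun hmem => hab ?_⟩⟩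
  · exact eq_of_mem_convexHull_of_det3_neg (mem_erase.2 ⟨hab.symm, hb⟩) (det3_self_right a b).le
      (fun y hy hyb => hneg y (mem_of_mem_erase hy) (ne_of_mem_erase hy) hyb)
      (det3_self_apex a b) hmem
  · exact (eq_of_mem_convexHull_of_det3_neg (mem_erase.2 ⟨hab, ha⟩) (det3_self_apex a b).le
      (fun y hy hya => hneg y (mem_of_mem_erase hy) hya (ne_of_mem_erase hy))
      (det3_self_right a b) hmem).symm

lemma IsJEdge.symm (h : IsJEdge S j a b) : IsJEdge S j b a :=
  ⟨h.2.1, h.1, h.2.2.1.symm, h.2.2.2.symm⟩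

lemma IsJEdge.mem_hullVertices (hgp : GenPos S) (h : IsJEdge S 0 a b) :
    a ∈ hullVertices S ∧ b ∈ hullVertices S := by
  obtain ⟨ha, hb, hab, h0 | h0⟩ := h
  · exact mem_hullVertices_of_sideCount_eq_zero hgp ha hb hab h0
  · exact (mem_hullVertices_of_sideCount_eq_zero hgp hb ha hab.symm h0).symm

lemma IsJEdge.eq_zero_or_eq_of_isJEdge_zero (hgp : GenPos S)
    (h : IsJEdge S j a b) (h0 : IsJEdge S 0 a b) : j = 0 ∨ j = S.card - 2 := by
  obtain ⟨ha, hb, hab, hj⟩ := h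
  have := sideCount_add_sideCount hgp ha hb hab
  have := h0.2.2.2
  omega

/-- The points where `sideCount S a` takes its extreme values `0` and `n - 2` span `0`-edges
with `a`, so they are hull vertices: the other two. -/
lemma isJEdge_zero_of_mem_hullVertices (hgp : GenPos S)
    (h3 : (hullVertices S).card = 3) (ha : a ∈ hullVertices S)
    (hb : b ∈ hullVertices S) (hab : a ≠ b) : IsJEdge S 0 a b := by
  have haS := (mem_filter.1 ha).1
  have hbS := (mem_filter.1 hb).1
  have hn : 3 ≤ S.card := h3 ▸ card_le_card (filter_subset _ _)
  have hrange : ∀ i, i < S.card - 1 → i ∈ (S.erase a).image (sideCount S a) := fun i hi => by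
    rw [image_sideCount_eq_range hgp ha]; exact mem_range.2 hi
  obtain ⟨x₀, hx₀, h₀⟩ := mem_image.1 (hrange 0 (by omega))
  obtain ⟨x₁, hx₁, h₁⟩ := mem_image.1 (hrange (S.card - 2) (by omega))
  have h₁' : sideCount S x₁ a = 0 := by
    have := sideCount_add_sideCount hgp haS (mem_of_mem_erase hx₁) (ne_of_mem_erase hx₁).symm
    omega
  have hx₀v := (mem_hullVertices_of_sideCount_eq_zero hgp haS (mem_of_mem_erase hx₀)
    (ne_of_mem_erase hx₀).symm h₀).2
  have hx₁v := (mem_hullVertices_of_sideCount_eq_zero hgp (mem_of_mem_erase hx₁) haS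
    (ne_of_mem_erase hx₁) h₁').1
  have hx₀₁ : x₀ ≠ x₁ := by rintro rfl; omega
  have hall : {a, x₀, x₁} = hullVertices S := by
    refine eq_of_subset_of_card_le (by simp [insert_subset_iff, ha, hx₀v, hx₁v]) ?_
    rw [h3, card_insert_of_notMem
      (by simp [(ne_of_mem_erase hx₀).symm, (ne_of_mem_erase hx₁).symm]), card_pair hx₀₁]
  rw [← hall, mem_insert, mem_insert, mem_singleton] at hb
  rcases hb.resolve_left hab.symm with rfl | rfl
  · exact ⟨haS, hbS, hab, Or.inl h₀⟩
  · exact ⟨haS, hbS, hab, Or.inr h₁'⟩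

lemma ejInc_eq_sum_card_filter {A : Finset Pt} (hA : ∀ a ∈ A, ∀ b ∈ A, ¬ IsJEdge S j a b) :
    ejInc S A j = ∑ v ∈ A, (S.filter (IsJEdge S j v)).card := by
  have hset : (S.powersetCard 2).filter
      (fun e => (∃ a b : Pt, e = {a, b} ∧ IsJEdge S j a b) ∧ (e ∩ A).Nonempty) =
      A.biUnion (fun v => (S.filter (IsJEdge S j v)).image (fun w => {v, w})) := by
    ext e
    simp only [mem_filter, mem_powersetCard, mem_biUnion, mem_image]
    constructor
    · rintro ⟨-, ⟨a, b, rfl, hab⟩, z, hz⟩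
      obtain ⟨hze, hzA⟩ := mem_inter.1 hz
      rcases mem_insert.1 hze with rfl | hzb
      · exact ⟨z, hzA, b, ⟨hab.2.1, hab⟩, rfl⟩
      · rw [mem_singleton.1 hzb] at hzA
        exact ⟨b, hzA, a, ⟨hab.1, hab.symm⟩, pair_comm _ _⟩
    · rintro ⟨v, hvA, w, ⟨-, hvw⟩, rfl⟩
      refine ⟨⟨?_, card_pair hvw.2.2.1⟩, ⟨v, w, rfl, hvw⟩, v, by simp [hvA]⟩
      simp [insert_subset_iff, hvw.1, hvw.2.1]
  have hinj : ∀ v, Set.InjOn (fun w => ({v, w} : Finset Pt)) (S.filter (IsJEdge S j v)) := by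
    intro v w hw w' _ h
    have : w ∈ ({v, w'} : Finset Pt) := by simp only at h; simp [← h]
    simpa [(mem_filter.1 hw).2.2.2.1.symm] using this
  have hdisj : (A : Set Pt).PairwiseDisjoint
      (fun v => (S.filter (IsJEdge S j v)).image (fun w => ({v, w} : Finset Pt))) := by
    intro v hv v' hv' hvv'
    refine disjoint_left.2 fun e he he' => ?_
    obtain ⟨w, hw, rfl⟩ := mem_image.1 he
    obtain ⟨w', hw', hee⟩ := mem_image.1 he'
    have : v' ∈ ({v, w} : Finset Pt) := by simp [← hee]
    rcases mem_insert.1 this with h | h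
    · exact hvv' h.symm
    · rw [mem_singleton.1 h] at hv'
      exact hA v hv w hv' (mem_filter.1 hw).2
  rw [ejInc, hset, card_biUnion hdisj]
  exact sum_congr rfl fun v _ => card_image_of_injOn (hinj v)

lemma ej_zero_eq_three (hgp : GenPos S) (h3 : (hullVertices S).card = 3) :
    ej S 0 = 3 := by
  have hset : (S.powersetCard 2).filter (fun e => ∃ a b : Pt, e = {a, b} ∧ IsJEdge S 0 a b) =
      (hullVertices S).powersetCard 2 := by
    ext e
    simp only [mem_filter, mem_powersetCard]
    constructor
    · rintro ⟨⟨-, he⟩, a, b, rfl, hab⟩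
      obtain ⟨ha, hb⟩ := hab.mem_hullVertices hgp
      exact ⟨by simp [insert_subset_iff, ha, hb], he⟩
    · rintro ⟨hsub, he⟩
      obtain ⟨a, b, hab, rfl⟩ := card_eq_two.1 he
      obtain ⟨ha, hb⟩ : a ∈ hullVertices S ∧ b ∈ hullVertices S := by
        simpa [insert_subset_iff] using hsub
      exact ⟨⟨hsub.trans (filter_subset _ _), he⟩, a, b, rfl,
        isJEdge_zero_of_mem_hullVertices hgp h3 ha hb hab⟩
  rw [ej, hset, card_powersetCard, h3]
  rfl

lemma ejInc_hullVertices_zero (hgp : GenPos S) :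
    ejInc S (hullVertices S) 0 = ej S 0 := by
  refine congrArg card (filter_congr fun e _ => and_iff_left_of_imp ?_)
  rintro ⟨a, b, rfl, hab⟩
  exact ⟨a, mem_inter.2 ⟨mem_insert_self a _, (hab.mem_hullVertices hgp).1⟩⟩

lemma ejInc_hullVertices_eq_six (hgp : GenPos S) (h3 : (hullVertices S).card = 3) (hj1 : 1 ≤ j)
    (hjn : 2 * j + 2 < S.card) : ejInc S (hullVertices S) j = 6 := by
  have hA : ∀ a ∈ hullVertices S, ∀ b ∈ hullVertices S, ¬ IsJEdge S j a b := by
    intro a ha b hb hjab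
    have := hjab.eq_zero_or_eq_of_isJEdge_zero hgp
      (isJEdge_zero_of_mem_hullVertices hgp h3 ha hb hjab.2.2.1)
    omega
  rw [ejInc_eq_sum_card_filter hA,
    sum_congr rfl fun v hv => card_filter_isJEdge hgp hv (by omega) (by omega), sum_const, h3,
    smul_eq_mul]

end

/-- if the convex hull of `S` is the triangle `p q r`, then `S` has
exactly three `0`-edges and, for every `1 ≤ j < (n-2)/2`, exactly six `j`-edges
incident to `p`, `q` or `r`; hence for `1 ≤ k < (n-2)/2` there are exactly
`3 + 6k` `(≤k)`-edges incident to a convex hull vertex. -/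
theorem statement9 (S : Finset Pt) (n : ℕ) (hcard : S.card = n) (hgp : GenPos S)
    (p q r : Pt) (hpq : p ≠ q) (hpr : p ≠ r) (hqr : q ≠ r)
    (hhull : hullVertices S = {p, q, r}) :
    ej S 0 = 3 ∧ ejInc S {p, q, r} 0 = 3 ∧
    (∀ j : ℕ, 1 ≤ j → 2 * j + 2 < n → ejInc S {p, q, r} j = 6) ∧
    (∀ k : ℕ, 1 ≤ k → 2 * k + 2 < n →
      ∑ j ∈ Finset.range (k + 1), ejInc S {p, q, r} j = 3 + 6 * k) := by
  subst hcard
  have h3 : (hullVertices S).card = 3 := by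
    rw [hhull, card_insert_of_notMem (by simp [hpq, hpr]), card_pair hqr]
  rw [← hhull]
  have hzero : ej S 0 = 3 := ej_zero_eq_three hgp h3
  have hzeroInc : ejInc S (hullVertices S) 0 = 3 := (ejInc_hullVertices_zero hgp).trans hzero
  have hj : ∀ j : ℕ, 1 ≤ j → 2 * j + 2 < S.card → ejInc S (hullVertices S) j = 6 :=
    fun j hj1 hjn => ejInc_hullVertices_eq_six hgp h3 hj1 hjn
  refine ⟨hzero, hzeroInc, hj, fun k hk hkn => ?_⟩
  rw [sum_range_succ', sum_congr rfl fun i hi => hj (i + 1) (by omega)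
    (by have := mem_range.1 hi; omega), sum_const, card_range, hzeroInc, smul_eq_mul]
  ring
end

section
/- If the convex hull of a point set S is a triangle with vertex set {p,q,r} and S₁ = S \ {p,q,r}, then every j-edge of S₁ is either a (j+1)-edge or a (j+2)-edge of S. -/
open Finset
open scoped Classical

/-! By Krein–Milman every point of `S` lies in the triangle `T = {p, q, r}`. For `a ≠ b` in
`S \ T`, the line `ab` meets that triangle (at `a`), so neither open side of it contains all
of `T`; by general position no vertex lies on it. Hence each side of `ab` contains one or two
points of `T`, and passing from `S \ T` to `S` raises each side count by one or two. -/

theorem Set.Finite.convexHull_extremePoints_convexHull {E : Type*} [AddCommGroup E] [Module ℝ E]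
    [TopologicalSpace E] [T2Space E] [IsTopologicalAddGroup E] [ContinuousSMul ℝ E]
    [LocallyConvexSpace ℝ E] {s : Set E} (hs : s.Finite) :
    convexHull ℝ ((convexHull ℝ s).extremePoints ℝ) = convexHull ℝ s := by
  have hext : ((convexHull ℝ s).extremePoints ℝ).Finite :=
    hs.subset extremePoints_convexHull_subset
  rw [← (hext.isClosed_convexHull ℝ).closure_eq]
  exact closure_convexHull_extremePoints (hs.isCompact_convexHull ℝ) (convex_convexHull ℝ s)

lemma extremePoints_convexHull_subset_hullVertices (S : Finset Pt) :
    (convexHull ℝ (S : Set Pt)).extremePoints ℝ ⊆ hullVertices S := by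
  intro x hx
  have hxS : x ∈ S := extremePoints_convexHull_subset hx
  obtain ⟨-, hx⟩ :=
    (convex_convexHull ℝ (S : Set Pt)).mem_extremePoints_iff_mem_sdiff_convexHull_sdiff.1 hx
  refine mem_filter.2 ⟨hxS, fun hmem => hx (convexHull_mono ?_ hmem)⟩
  intro y hy
  rw [coe_erase] at hy
  exact ⟨subset_convexHull ℝ _ hy.1, hy.2⟩

lemma subset_convexHull_hullVertices (S : Finset Pt) :
    (S : Set Pt) ⊆ convexHull ℝ (hullVertices S : Set Pt) :=
  calc (S : Set Pt) ⊆ convexHull ℝ (S : Set Pt) := subset_convexHull ℝ _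
    _ = convexHull ℝ ((convexHull ℝ (S : Set Pt)).extremePoints ℝ) :=
      S.finite_toSet.convexHull_extremePoints_convexHull.symm
    _ ⊆ convexHull ℝ (hullVertices S : Set Pt) :=
      convexHull_mono (extremePoints_convexHull_subset_hullVertices S)

lemma det3_self_left (u v : Pt) : det3 u v u = 0 := by
  simp [det3]

lemma det3_swap (u v x : Pt) : det3 v u x = -det3 u v x := by
  simp only [det3]; ring

lemma convex_det3_pos (u v : Pt) : Convex ℝ {x | 0 < det3 u v x} := by
  intro x hx y hy α β hα hβ hαβ
  have hlin : det3 u v (α • x + β • y) = α * det3 u v x + β * det3 u v y := by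
    obtain rfl : β = 1 - α := by linarith
    simp only [det3, Prod.fst_add, Prod.snd_add, Prod.smul_fst, Prod.smul_snd, smul_eq_mul]
    ring
  have hx : 0 < det3 u v x := hx
  have hy : 0 < det3 u v y := hy
  show 0 < det3 u v (α • x + β • y)
  rw [hlin]
  rcases hα.eq_or_lt with rfl | hα
  · obtain rfl : β = 1 := by linarith
    simpa using hy
  · positivity

lemma sideCount_sdiff_add_sideCount {S T : Finset Pt} (hTS : T ⊆ S) (u v : Pt) :
    sideCount (S \ T) u v + sideCount T u v = sideCount S u v := by
  unfold sideCount
  rw [← card_union_of_disjoint (disjoint_filter_filter sdiff_disjoint), ← filter_union,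
    sdiff_union_of_subset hTS]

lemma exists_det3_nonpos_of_mem_convexHull {T : Finset Pt} {u v w : Pt}
    (hw : w ∈ convexHull ℝ (T : Set Pt)) (hwuv : det3 u v w = 0) :
    ∃ x ∈ T, det3 u v x ≤ 0 := by
  by_contra! h
  have : 0 < det3 u v w := convexHull_min (fun x hx => h x hx) (convex_det3_pos u v) hw
  exact this.ne' hwuv

lemma one_le_sideCount_le_two {T : Finset Pt} (hT : #T ≤ 3) {u v : Pt}
    (hu : u ∈ convexHull ℝ (T : Set Pt)) (hline : ∀ x ∈ T, det3 u v x ≠ 0) :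
    1 ≤ sideCount T u v ∧ sideCount T u v ≤ 2 := by
  obtain ⟨x, hxT, hx⟩ := exists_det3_nonpos_of_mem_convexHull hu (det3_self_left u v)
  obtain ⟨y, hyT, hy⟩ := exists_det3_nonpos_of_mem_convexHull hu
    (by rw [det3_swap, det3_self_left, neg_zero] : det3 v u u = 0)
  rw [det3_swap] at hy
  have hy : 0 < det3 u v y := (neg_nonpos.1 hy).lt_of_ne' (hline y hyT)
  constructor
  · exact card_pos.2 ⟨y, mem_filter.2 ⟨hyT, hy⟩⟩
  · have : (T.filter fun z => 0 < det3 u v z) ⊂ T := filter_ssubset.2 ⟨x, hxT, hx.not_gt⟩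
    exact Nat.le_of_lt_succ ((card_lt_card this).trans_le hT)

lemma sideCount_eq_add_one_or_add_two {S T : Finset Pt} (hgp : GenPos S) (hTS : T ⊆ S)
    (hT : #T ≤ 3) (hST : (S : Set Pt) ⊆ convexHull ℝ (T : Set Pt)) {u v : Pt}
    (hu : u ∈ S \ T) (hv : v ∈ S \ T) (huv : u ≠ v) :
    sideCount S u v = sideCount (S \ T) u v + 1 ∨
      sideCount S u v = sideCount (S \ T) u v + 2 := by
  obtain ⟨huS, huT⟩ := mem_sdiff.1 hu
  obtain ⟨hvS, hvT⟩ := mem_sdiff.1 hv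
  have hline : ∀ x ∈ T, det3 u v x ≠ 0 := fun x hx =>
    hgp u huS v hvS x (hTS hx) huv (ne_of_mem_of_not_mem hx huT).symm
      (ne_of_mem_of_not_mem hx hvT).symm
  have := one_le_sideCount_le_two hT (hST huS) hline
  have := sideCount_sdiff_add_sideCount hTS u v
  omega

lemma IsJEdge.add_one_or_add_two_of_sdiff {S T : Finset Pt} (hgp : GenPos S) (hTS : T ⊆ S)
    (hT : #T ≤ 3) (hST : (S : Set Pt) ⊆ convexHull ℝ (T : Set Pt)) {j : ℕ} {a b : Pt}
    (h : IsJEdge (S \ T) j a b) :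
    IsJEdge S (j + 1) a b ∨ IsJEdge S (j + 2) a b := by
  obtain ⟨ha, hb, hab, hside⟩ := h
  have haS := (mem_sdiff.1 ha).1
  have hbS := (mem_sdiff.1 hb).1
  rcases hside with h | h
  · rcases sideCount_eq_add_one_or_add_two hgp hTS hT hST ha hb hab with h' | h'
    · exact Or.inl ⟨haS, hbS, hab, Or.inl (by omega)⟩
    · exact Or.inr ⟨haS, hbS, hab, Or.inl (by omega)⟩
  · rcases sideCount_eq_add_one_or_add_two hgp hTS hT hST hb ha hab.symm with h' | h'
    · exact Or.inl ⟨haS, hbS, hab, Or.inr (by omega)⟩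
    · exact Or.inr ⟨haS, hbS, hab, Or.inr (by omega)⟩

theorem statement10_general (S : Finset Pt) (hgp : GenPos S) (p q r : Pt)
    (hhull : hullVertices S = {p, q, r}) (j : ℕ) (a b : Pt)
    (hedge : IsJEdge (S \ {p, q, r}) j a b) :
    IsJEdge S (j + 1) a b ∨ IsJEdge S (j + 2) a b := by
  have hTS : {p, q, r} ⊆ S := hhull ▸ filter_subset _ S
  have hST : (S : Set Pt) ⊆ convexHull ℝ (({p, q, r} : Finset Pt) : Set Pt) :=
    hhull ▸ subset_convexHull_hullVertices S
  exact IsJEdge.add_one_or_add_two_of_sdiff hgp hTS card_le_three hST hedge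

/-- if the convex hull of `S` is the triangle `p q r` and
`S₁ = S \ {p,q,r}`, then every `j`-edge of `S₁` is a `(j+1)`-edge or a
`(j+2)`-edge of `S`. -/
theorem statement10 (S : Finset Pt) (hgp : GenPos S) (p q r : Pt)
    (hpq : p ≠ q) (hpr : p ≠ r) (hqr : q ≠ r)
    (hhull : hullVertices S = {p, q, r}) (j : ℕ) (a b : Pt)
    (hedge : IsJEdge (S \ {p, q, r}) j a b) :
    IsJEdge S (j + 1) a b ∨ IsJEdge S (j + 2) a b :=
  statement10_general S hgp p q r hhull j a b hedge
end

section
/- Let S be a set of n points in the plane in general position and let T be a triangle containing S. If ⌊n/3⌋ ≤ k ≤ n/2 - 1, then there exist at least 3k - n + 3 oriented k-edges of S having exactly one vertex of T strictly to their right. -/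
open Finset
open scoped Classical

set_option maxHeartbeats 1000000

namespace St11


noncomputable def ipd (p a y : Pt) : ℝ :=
  (a.1 - p.1) * (y.1 - p.1) + (a.2 - p.2) * (y.2 - p.2)

lemma det3_cyc (a b c : Pt) : det3 a b c = det3 b c a := by
  simp only [det3]; ring

lemma det3_swap23 (a b c : Pt) : det3 a b c = -det3 a c b := by
  simp only [det3]; ring

lemma det3_swap12 (a b c : Pt) : det3 a b c = -det3 b a c := by
  simp only [det3]; ring

lemma ipd_self_pos {p a : Pt} (h : a ≠ p) : 0 < ipd p a a := by
  have h1 : a.1 - p.1 ≠ 0 ∨ a.2 - p.2 ≠ 0 := by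
    by_contra hc
    push_neg at hc
    exact h (Prod.ext (by linarith [hc.1]) (by linarith [hc.2]))
  rcases h1 with h1 | h1
  · have := mul_self_pos.2 h1
    simp only [ipd]; nlinarith [sq_nonneg (a.2 - p.2)]
  · have := mul_self_pos.2 h1
    simp only [ipd]; nlinarith [sq_nonneg (a.1 - p.1)]

lemma key_identity (p a y z : Pt) :
    ipd p a y * det3 p a z - ipd p a z * det3 p a y = ipd p a a * det3 p y z := by
  simp only [ipd, det3]; ring

lemma collinear_param {p a y : Pt} (hap : a ≠ p) (h : det3 p a y = 0) (hyp : y ≠ p) :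
    ∃ t : ℝ, t ≠ 0 ∧ y.1 - p.1 = t * (a.1 - p.1) ∧ y.2 - p.2 = t * (a.2 - p.2) := by
  have h' : (a.1 - p.1) * (y.2 - p.2) = (a.2 - p.2) * (y.1 - p.1) := by
    simp only [det3] at h; linarith
  have hne : a.1 - p.1 ≠ 0 ∨ a.2 - p.2 ≠ 0 := by
    by_contra hc; push_neg at hc
    exact hap (Prod.ext (by linarith [hc.1]) (by linarith [hc.2]))
  rcases hne with h1 | h1
  · refine ⟨(y.1 - p.1) / (a.1 - p.1), ?_, by field_simp, ?_⟩
    · intro h0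
      have : y.1 - p.1 = 0 := by
        field_simp at h0; simpa using h0
      have h9 : y.2 - p.2 = 0 := by
        have ha2 : (a.2 - p.2) * (y.1 - p.1) = 0 := by rw [this]; ring
        have ha3 : (a.1 - p.1) * (y.2 - p.2) = 0 := by rw [h']; exact ha2
        rcases mul_eq_zero.1 ha3 with h2 | h2
        · exact absurd h2 h1
        · exact h2
      exact hyp (Prod.ext (by linarith) (by linarith))
    · field_simp
      linarith [h']
  · refine ⟨(y.2 - p.2) / (a.2 - p.2), ?_, ?_, by field_simp⟩
    · intro h0
      have h2 : y.2 - p.2 = 0 := by field_simp at h0; simpa using h0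
      have h3 : (a.2 - p.2) * (y.1 - p.1) = 0 := by rw [← h', h2]; ring
      rcases mul_eq_zero.1 h3 with h4 | h4
      · exact absurd h4 h1
      · exact hyp (Prod.ext (by linarith) (by linarith))
    · field_simp
      linarith [h']

lemma rank_lemma {K : Type*} [LinearOrder K] (S : Finset Pt) (key : Pt → K)
    (hinj : Set.InjOn key S) (k : ℕ) (hk : k + 1 ≤ S.card) :
    k + 1 ≤ (S.filter (fun p => (S.filter (fun y => key y < key p)).card ≤ k)).card := by
  classical
  set T : Finset K := S.image key with hT
  have hcardT : T.card = S.card := Finset.card_image_of_injOn hinj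
  -- rank within T
  set r : K → ℕ := fun t => (T.filter (fun u => u < t)).card with hr
  have hmono : ∀ t ∈ T, ∀ t' ∈ T, t < t' → r t < r t' := by
    intro t ht t' ht' hlt
    apply Finset.card_lt_card
    constructor
    · intro u hu
      simp only [Finset.mem_filter] at hu ⊢
      exact ⟨hu.1, lt_trans hu.2 hlt⟩
    · intro hsub
      have : t ∈ T.filter (fun u => u < t') := by
        simp only [Finset.mem_filter]; exact ⟨ht, hlt⟩
      have := hsub this
      simp only [Finset.mem_filter] at this
      exact absurd this.2 (lt_irrefl t)
  have hrinj : Set.InjOn r T := by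
    intro t ht t' ht' heq
    by_contra hne
    rcases lt_or_gt_of_ne hne with h | h
    · exact absurd heq (Nat.ne_of_lt (hmono t ht t' ht' h))
    · exact absurd heq.symm (Nat.ne_of_lt (hmono t' ht' t ht h))
  have hrlt : ∀ t ∈ T, r t < T.card := by
    intro t ht
    have : T.filter (fun u => u < t) ⊂ T := by
      constructor
      · exact Finset.filter_subset _ _
      · intro hsub
        have := hsub ht
        simp only [Finset.mem_filter] at this
        exact absurd this.2 (lt_irrefl t)
    exact Finset.card_lt_card this
  have himg : T.image r = Finset.range T.card := by
    apply Finset.eq_of_subset_of_card_le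
    · intro m hm
      simp only [Finset.mem_image] at hm
      rcases hm with ⟨t, ht, rfl⟩
      exact Finset.mem_range.2 (hrlt t ht)
    · rw [Finset.card_range, Finset.card_image_of_injOn hrinj]
  -- relate ranks of p ∈ S with ranks in T
  have hrk : ∀ p ∈ S, (S.filter (fun y => key y < key p)).card = r (key p) := by
    intro p hp
    have himg2 : T.filter (fun u => u < key p) = (S.filter (fun y => key y < key p)).image key := by
      ext u
      constructor
      · intro hu
        have hu1 := (Finset.mem_filter.1 hu).1
        have hu2 := (Finset.mem_filter.1 hu).2
        rcases Finset.mem_image.1 hu1 with ⟨y, hy, rfl⟩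
        exact Finset.mem_image.2 ⟨y, Finset.mem_filter.2 ⟨hy, hu2⟩, rfl⟩
      · intro hu
        rcases Finset.mem_image.1 hu with ⟨y, hy, rfl⟩
        have hy1 := (Finset.mem_filter.1 hy).1
        have hy2 := (Finset.mem_filter.1 hy).2
        exact Finset.mem_filter.2 ⟨Finset.mem_image_of_mem _ hy1, hy2⟩
    have : r (key p) = ((S.filter (fun y => key y < key p)).image key).card := by
      show (T.filter (fun u => u < key p)).card = _
      rw [himg2]
    rw [this, Finset.card_image_of_injOn (hinj.mono (fun x hx => (Finset.mem_filter.1 hx).1))]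
  -- count
  have h1 : (T.filter (fun t => r t ≤ k)).card
      = (S.filter (fun p => (S.filter (fun y => key y < key p)).card ≤ k)).card := by
    have himg3 : T.filter (fun t => r t ≤ k)
        = (S.filter (fun p => (S.filter (fun y => key y < key p)).card ≤ k)).image key := by
      ext u
      constructor
      · intro hu
        have hu1 := (Finset.mem_filter.1 hu).1
        have hu2 := (Finset.mem_filter.1 hu).2
        rcases Finset.mem_image.1 hu1 with ⟨y, hy, rfl⟩
        exact Finset.mem_image.2 ⟨y, Finset.mem_filter.2 ⟨hy, by rw [hrk y hy]; exact hu2⟩, rfl⟩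
      · intro hu
        rcases Finset.mem_image.1 hu with ⟨y, hy, rfl⟩
        have hy1 := (Finset.mem_filter.1 hy).1
        have hy2 := (Finset.mem_filter.1 hy).2
        exact Finset.mem_filter.2 ⟨Finset.mem_image_of_mem _ hy1, by rw [← hrk y hy1]; exact hy2⟩
    rw [himg3, Finset.card_image_of_injOn (hinj.mono (fun x hx => (Finset.mem_filter.1 hx).1))]
  rw [← h1]
  have h2 : (T.filter (fun t => r t ≤ k)).card = ((T.image r).filter (fun m => m ≤ k)).card := by
    rw [← Finset.card_image_of_injOn (hrinj.mono (fun x hx => (Finset.mem_filter.1 hx).1))]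
    congr 1
    ext m
    constructor
    · intro hm
      rcases Finset.mem_image.1 hm with ⟨t, ht, rfl⟩
      have ht1 := (Finset.mem_filter.1 ht).1
      have ht2 := (Finset.mem_filter.1 ht).2
      exact Finset.mem_filter.2 ⟨Finset.mem_image_of_mem _ ht1, ht2⟩
    · intro hm
      have hm1 := (Finset.mem_filter.1 hm).1
      have hm2 := (Finset.mem_filter.1 hm).2
      rcases Finset.mem_image.1 hm1 with ⟨t, ht, rfl⟩
      exact Finset.mem_image.2 ⟨t, Finset.mem_filter.2 ⟨ht, hm2⟩, rfl⟩
  rw [h2, himg]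
  have h3 : (Finset.range T.card).filter (fun m => m ≤ k) = Finset.range (k+1) := by
    ext m
    simp only [Finset.mem_filter, Finset.mem_range, Nat.lt_succ_iff]
    rw [hcardT]
    constructor
    · rintro ⟨_, h⟩; exact h
    · intro h; exact ⟨by omega, h⟩
  rw [h3, Finset.card_range]




noncomputable def kap (p a y : Pt) : ℝ := ipd p a y / det3 p a y

lemma det3_pap (p a : Pt) : det3 p a p = 0 := by simp only [det3]; ring
lemma det3_pxx (p x : Pt) : det3 p x x = 0 := by simp only [det3]; ring

lemma kap_sub {p a y z : Pt} (hy : det3 p a y ≠ 0) (hz : det3 p a z ≠ 0) :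
    ipd p a a * det3 p y z = (kap p a y - kap p a z) * (det3 p a y * det3 p a z) := by
  have h := key_identity p a y z
  simp only [kap]
  field_simp
  linarith [h]

lemma det_pzy_neg_iff {p a z y : Pt} (hap : a ≠ p)
    (hz : det3 p a z ≠ 0) (hy : det3 p a y ≠ 0) :
    det3 p z y < 0 ↔
      ((0 < det3 p a z ∧ 0 < det3 p a y ∧ kap p a z < kap p a y) ∨
       (0 < det3 p a z ∧ det3 p a y < 0 ∧ kap p a y < kap p a z) ∨
       (det3 p a z < 0 ∧ 0 < det3 p a y ∧ kap p a y < kap p a z) ∨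
       (det3 p a z < 0 ∧ det3 p a y < 0 ∧ kap p a z < kap p a y)) := by
  have huu := ipd_self_pos hap
  have heq : ipd p a a * det3 p z y = (kap p a z - kap p a y) * (det3 p a z * det3 p a y) :=
    kap_sub hz hy
  rcases hz.lt_or_gt with hz1 | hz1 <;> rcases hy.lt_or_gt with hy1 | hy1
  · -- dz < 0, dy < 0
    constructor
    · intro h; refine Or.inr (Or.inr (Or.inr ⟨hz1, hy1, ?_⟩))
      nlinarith [mul_pos_of_neg_of_neg hz1 hy1]
    · rintro (⟨h1,_⟩|⟨h1,_⟩|⟨_,h2,_⟩|⟨_,_,h3⟩)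
      · linarith
      · linarith
      · linarith
      · nlinarith [mul_pos_of_neg_of_neg hz1 hy1]
  · -- dz < 0, 0 < dy
    constructor
    · intro h; refine Or.inr (Or.inr (Or.inl ⟨hz1, hy1, ?_⟩))
      nlinarith [mul_neg_of_neg_of_pos hz1 hy1]
    · rintro (⟨h1,_⟩|⟨h1,_⟩|⟨_,_,h3⟩|⟨_,h2,_⟩)
      · linarith
      · linarith
      · nlinarith [mul_neg_of_neg_of_pos hz1 hy1]
      · linarith
  · -- 0 < dz, dy < 0
    constructor
    · intro h; refine Or.inr (Or.inl ⟨hz1, hy1, ?_⟩)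
      nlinarith [mul_neg_of_pos_of_neg hz1 hy1]
    · rintro (⟨_,h2,_⟩|⟨_,_,h3⟩|⟨h1,_⟩|⟨h1,_⟩)
      · linarith
      · nlinarith [mul_neg_of_pos_of_neg hz1 hy1]
      · linarith
      · linarith
  · -- 0 < dz, 0 < dy
    constructor
    · intro h; refine Or.inl ⟨hz1, hy1, ?_⟩
      nlinarith [mul_pos hz1 hy1]
    · rintro (⟨_,_,h3⟩|⟨_,h2,_⟩|⟨h1,_⟩|⟨h1,_⟩)
      · nlinarith [mul_pos hz1 hy1]
      · linarith
      · linarith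
      · linarith

lemma det_pzy_eq_zero_iff {p a z y : Pt} (hap : a ≠ p)
    (hz : det3 p a z ≠ 0) (hy : det3 p a y ≠ 0) :
    det3 p z y = 0 ↔ kap p a z = kap p a y := by
  have huu := ipd_self_pos hap
  have heq : ipd p a a * det3 p z y = (kap p a z - kap p a y) * (det3 p a z * det3 p a y) :=
    kap_sub hz hy
  have hne : det3 p a z * det3 p a y ≠ 0 := mul_ne_zero hz hy
  constructor
  · intro h
    rw [h, mul_zero] at heq
    rcases mul_eq_zero.1 heq.symm with h1 | h1
    · linarith [sub_eq_zero.1 h1]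
    · exact absurd h1 hne
  · intro h
    rw [h] at heq
    simp at heq
    rcases heq with h1 | h1
    · linarith
    · exact h1

lemma det_pzy_coll {p a z y : Pt} (hap : a ≠ p) (hy0 : det3 p a y = 0) (hyp : y ≠ p)
    (htt : ∃ t : ℝ, t ≠ 0 ∧ y.1 - p.1 = t * (a.1 - p.1) ∧ y.2 - p.2 = t * (a.2 - p.2)) :
    (det3 p z y < 0 ↔ (0 < det3 p a z ∧ 0 < ipd p a y) ∨ (det3 p a z < 0 ∧ ipd p a y < 0))
      ∧ (det3 p z y = 0 ↔ det3 p a z = 0) := by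
  rcases htt with ⟨t, ht0, ht1, ht2⟩
  have huu := ipd_self_pos hap
  have hdet : det3 p z y = -t * det3 p a z := by
    simp only [det3]
    linear_combination (z.1 - p.1) * ht2 - (z.2 - p.2) * ht1
  have hipd : ipd p a y = t * ipd p a a := by
    simp only [ipd]
    linear_combination (a.1 - p.1) * ht1 + (a.2 - p.2) * ht2
  constructor
  · rw [hdet, hipd]
    constructor
    · intro h
      rcases ht0.lt_or_gt with h1 | h1
      · refine Or.inr ⟨?_, by nlinarith⟩
        nlinarith
      · refine Or.inl ⟨?_, by nlinarith⟩
        nlinarith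
    · rintro (⟨h1, h2⟩ | ⟨h1, h2⟩) <;> nlinarith
  · rw [hdet]
    constructor
    · intro h
      rcases mul_eq_zero.1 h with h1 | h1
      · exact absurd (by linarith : t = 0) ht0
      · exact h1
    · intro h; rw [h]; ring




noncomputable def fcnt (S : Finset Pt) (p a : Pt) (c : ℝ) : ℕ :=
  (S.filter (fun y => (0 < det3 p a y ∧ c ≤ kap p a y) ∨
    (det3 p a y < 0 ∧ kap p a y < c) ∨
    (det3 p a y = 0 ∧ y ≠ p ∧ 0 < ipd p a y))).card

noncomputable def precnt (S : Finset Pt) (p a : Pt) (c : ℝ) : ℕ :=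
  (S.filter (fun y => (0 < det3 p a y ∧ c < kap p a y) ∨
    (det3 p a y < 0 ∧ kap p a y ≤ c) ∨
    (det3 p a y = 0 ∧ y ≠ p ∧ 0 < ipd p a y))).card

theorem ivt (S : Finset Pt) (p a : Pt) (k : ℕ) (hap : a ≠ p)
    (huniq : ∀ y ∈ S, ∀ z ∈ S, det3 p a y ≠ 0 → det3 p a z ≠ 0 → y ≠ z →
      kap p a y ≠ kap p a z) :
    ∀ (m : ℕ) (c₁ c₂ : ℝ), c₂ < c₁ →
    (S.filter (fun y => det3 p a y ≠ 0 ∧ c₂ < kap p a y ∧ kap p a y < c₁)).card ≤ m →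
    fcnt S p a c₁ ≤ k → k + 1 ≤ precnt S p a c₂ →
    ∃ x ∈ S, 0 < det3 p a x ∧ c₂ < kap p a x ∧ kap p a x < c₁ ∧
      (S.filter (fun y => det3 p x y < 0)).card = k := by
  intro m
  induction m with
  | zero =>
    intro c₁ c₂ hc hcard hf hpre
    exfalso
    have hempty : ∀ y ∈ S, ¬(det3 p a y ≠ 0 ∧ c₂ < kap p a y ∧ kap p a y < c₁) := by
      intro y hy hcon
      have : y ∈ S.filter (fun y => det3 p a y ≠ 0 ∧ c₂ < kap p a y ∧ kap p a y < c₁) :=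
        Finset.mem_filter.2 ⟨hy, hcon⟩
      have := Finset.card_pos.2 ⟨y, this⟩
      omega
    have heq : fcnt S p a c₁ = precnt S p a c₂ := by
      unfold fcnt precnt
      congr 1
      apply Finset.filter_congr
      intro y hy
      have hemp := hempty y hy
      constructor
      · rintro (⟨h1, h2⟩ | ⟨h1, h2⟩ | h1)
        · exact Or.inl ⟨h1, by linarith⟩
        · refine Or.inr (Or.inl ⟨h1, ?_⟩)
          by_contra hcon
          push_neg at hcon
          exact hemp ⟨ne_of_lt h1, hcon, h2⟩
        · exact Or.inr (Or.inr h1)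
      · rintro (⟨h1, h2⟩ | ⟨h1, h2⟩ | h1)
        · refine Or.inl ⟨h1, ?_⟩
          by_contra hcon
          push_neg at hcon
          exact hemp ⟨ne_of_gt h1, h2, hcon⟩
        · exact Or.inr (Or.inl ⟨h1, by linarith⟩)
        · exact Or.inr (Or.inr h1)
    omega
  | succ m ih =>
    intro c₁ c₂ hc hcard hf hpre
    set E := S.filter (fun y => det3 p a y ≠ 0 ∧ c₂ < kap p a y ∧ kap p a y < c₁) with hE
    rcases E.eq_empty_or_nonempty with hemp | hne
    · exact ih c₁ c₂ hc (by rw [← hE, hemp]; simp) hf hpre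
    · obtain ⟨xh, hxhE, hxhmax⟩ := Finset.exists_max_image E (kap p a) hne
      have hxhS : xh ∈ S := (Finset.mem_filter.1 hxhE).1
      have hxh0 : det3 p a xh ≠ 0 := (Finset.mem_filter.1 hxhE).2.1
      have hxlo : c₂ < kap p a xh := (Finset.mem_filter.1 hxhE).2.2.1
      have hxhi : kap p a xh < c₁ := (Finset.mem_filter.1 hxhE).2.2.2
      -- no event strictly between kap xh and c₁
      have hgap : ∀ y ∈ S, det3 p a y ≠ 0 → kap p a xh < kap p a y → kap p a y < c₁ → False := by
        intro y hy hy0 h1 h2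
        have : y ∈ E := Finset.mem_filter.2 ⟨hy, hy0, by linarith, h2⟩
        linarith [hxhmax y this]
      -- the new event-set is smaller
      have hcard' : (S.filter (fun y => det3 p a y ≠ 0 ∧ c₂ < kap p a y ∧
          kap p a y < kap p a xh)).card ≤ m := by
        have hsub : S.filter (fun y => det3 p a y ≠ 0 ∧ c₂ < kap p a y ∧
            kap p a y < kap p a xh) ⊆ E.erase xh := by
          intro y hy
          have h1 := Finset.mem_filter.1 hy
          refine Finset.mem_erase.2 ⟨?_, Finset.mem_filter.2 ⟨h1.1, h1.2.1, h1.2.2.1, by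
            linarith [h1.2.2.2]⟩⟩
          intro hcon
          rw [hcon] at h1
          linarith [h1.2.2.2]
        have := Finset.card_le_card hsub
        have hE1 : (E.erase xh).card = E.card - 1 := Finset.card_erase_of_mem hxhE
        have hE2 : E.card ≤ m + 1 := hcard
        have hE3 : 1 ≤ E.card := Finset.card_pos.2 hne
        omega
      rcases hxh0.lt_or_gt with hxneg | hxpos
      · -- σ = -1 : count drops, recurse
        have hstep : fcnt S p a c₁ = fcnt S p a (kap p a xh) + 1 := by
          unfold fcnt
          have hins : S.filter (fun y => (0 < det3 p a y ∧ c₁ ≤ kap p a y) ∨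
              (det3 p a y < 0 ∧ kap p a y < c₁) ∨
              (det3 p a y = 0 ∧ y ≠ p ∧ 0 < ipd p a y))
              = insert xh (S.filter (fun y => (0 < det3 p a y ∧ kap p a xh ≤ kap p a y) ∨
              (det3 p a y < 0 ∧ kap p a y < kap p a xh) ∨
              (det3 p a y = 0 ∧ y ≠ p ∧ 0 < ipd p a y))) := by
            ext y
            simp only [Finset.mem_insert, Finset.mem_filter]
            constructor
            · rintro ⟨hy, (⟨h1, h2⟩ | ⟨h1, h2⟩ | h1)⟩
              · refine Or.inr ⟨hy, Or.inl ⟨h1, by linarith⟩⟩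
              · by_cases hyx : y = xh
                · exact Or.inl hyx
                · refine Or.inr ⟨hy, Or.inr (Or.inl ⟨h1, ?_⟩)⟩
                  rcases lt_trichotomy (kap p a y) (kap p a xh) with h | h | h
                  · exact h
                  · exact absurd h (huniq y hy xh hxhS (ne_of_lt h1) hxh0 hyx)
                  · exact (hgap y hy (ne_of_lt h1) h h2).elim
              · exact Or.inr ⟨hy, Or.inr (Or.inr h1)⟩
            · rintro (rfl | ⟨hy, (⟨h1, h2⟩ | ⟨h1, h2⟩ | h1)⟩)
              · exact ⟨hxhS, Or.inr (Or.inl ⟨hxneg, hxhi⟩)⟩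
              · refine ⟨hy, Or.inl ⟨h1, ?_⟩⟩
                rcases lt_trichotomy (kap p a y) c₁ with h | h | h
                · exfalso
                  have hyx : y ≠ xh := by
                    intro hcon; rw [hcon] at h1; linarith
                  rcases lt_trichotomy (kap p a y) (kap p a xh) with h' | h' | h'
                  · linarith
                  · exact (huniq y hy xh hxhS (ne_of_gt h1) hxh0 hyx) h'
                  · exact hgap y hy (ne_of_gt h1) h' h
                · linarith
                · linarith
              · exact ⟨hy, Or.inr (Or.inl ⟨h1, by linarith⟩)⟩
              · exact ⟨hy, Or.inr (Or.inr h1)⟩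
          rw [hins, Finset.card_insert_of_notMem]
          intro hcon
          have := (Finset.mem_filter.1 hcon).2
          rcases this with ⟨h1, _⟩ | ⟨_, h2⟩ | ⟨h1, _⟩
          · linarith
          · linarith
          · linarith
        have hrec := ih (kap p a xh) c₂ hxlo hcard' (by omega) hpre
        obtain ⟨x, hx1, hx2, hx3, hx4, hx5⟩ := hrec
        exact ⟨x, hx1, hx2, hx3, by linarith, hx5⟩
      · -- σ = +1 : possible witness
        have hRval : (S.filter (fun y => det3 p xh y < 0)).card = fcnt S p a c₁ := by
          unfold fcnt
          congr 1
          apply Finset.filter_congr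
          intro y hy
          by_cases hyp : y = p
          · constructor
            · intro h
              rw [hyp, det3_pap p xh] at h
              linarith
            · rintro (⟨h1, _⟩ | ⟨h1, _⟩ | ⟨_, h2, _⟩)
              · rw [hyp, det3_pap p a] at h1; linarith
              · rw [hyp, det3_pap p a] at h1; linarith
              · exact absurd hyp h2
          · by_cases hy0 : det3 p a y = 0
            · -- collinear with sweep-ray anchor
              have hpar := collinear_param hap hy0 hyp
              have hco := det_pzy_coll (z := xh) hap hy0 hyp hpar
              rw [hco.1]
              constructor
              · rintro (⟨_, h2⟩ | ⟨h1, _⟩)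
                · exact Or.inr (Or.inr ⟨hy0, hyp, h2⟩)
                · linarith
              · rintro (⟨h1, _⟩ | ⟨h1, _⟩ | ⟨_, _, h3⟩)
                · exact absurd hy0 (ne_of_gt h1)
                · exact absurd hy0 (ne_of_lt h1)
                · exact Or.inl ⟨hxpos, h3⟩
            · by_cases hyx : y = xh
              · subst hyx
                rw [det3_pxx]
                constructor
                · intro h; linarith
                · rintro (⟨h1, h2⟩ | ⟨h1, _⟩ | ⟨h1, _⟩)
                  · linarith
                  · linarith
                  · exact absurd h1 hy0
              · have hkne : kap p a y ≠ kap p a xh := huniq y hy xh hxhS hy0 hxh0 hyx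
                rw [det_pzy_neg_iff hap (ne_of_gt hxpos) hy0]
                constructor
                · rintro (⟨_, h2, h3⟩ | ⟨_, h2, h3⟩ | ⟨h1, _⟩ | ⟨h1, _⟩)
                  · refine Or.inl ⟨h2, ?_⟩
                    by_contra hcon
                    push_neg at hcon
                    exact hgap y hy (ne_of_gt h2) h3 hcon
                  · exact Or.inr (Or.inl ⟨h2, by linarith⟩)
                  · linarith
                  · linarith
                · rintro (⟨h1, h2⟩ | ⟨h1, h2⟩ | ⟨h1, _⟩)
                  · refine Or.inl ⟨hxpos, h1, by linarith⟩
                  · refine Or.inr (Or.inl ⟨hxpos, h1, ?_⟩)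
                    rcases lt_trichotomy (kap p a y) (kap p a xh) with h | h | h
                    · exact h
                    · exact absurd h hkne
                    · exact (hgap y hy (ne_of_lt h1) h h2).elim
                  · exact absurd h1 hy0
        by_cases hRk : (S.filter (fun y => det3 p xh y < 0)).card = k
        · exact ⟨xh, hxhS, hxpos, hxlo, hxhi, hRk⟩
        · -- recurse
          have hRlt : (S.filter (fun y => det3 p xh y < 0)).card < k := by
            rw [hRval]
            omega
          have hstep : fcnt S p a (kap p a xh) = fcnt S p a c₁ + 1 := by
            unfold fcnt
            have hins : S.filter (fun y => (0 < det3 p a y ∧ kap p a xh ≤ kap p a y) ∨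
                (det3 p a y < 0 ∧ kap p a y < kap p a xh) ∨
                (det3 p a y = 0 ∧ y ≠ p ∧ 0 < ipd p a y))
                = insert xh (S.filter (fun y => (0 < det3 p a y ∧ c₁ ≤ kap p a y) ∨
                (det3 p a y < 0 ∧ kap p a y < c₁) ∨
                (det3 p a y = 0 ∧ y ≠ p ∧ 0 < ipd p a y))) := by
              ext y
              simp only [Finset.mem_insert, Finset.mem_filter]
              constructor
              · rintro ⟨hy, (⟨h1, h2⟩ | ⟨h1, h2⟩ | h1)⟩
                · by_cases hyx : y = xh
                  · exact Or.inl hyx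
                  · refine Or.inr ⟨hy, Or.inl ⟨h1, ?_⟩⟩
                    have hkne : kap p a y ≠ kap p a xh := huniq y hy xh hxhS (ne_of_gt h1) hxh0 hyx
                    have h2' : kap p a xh < kap p a y := lt_of_le_of_ne h2 (Ne.symm hkne)
                    by_contra hcon
                    push_neg at hcon
                    exact hgap y hy (ne_of_gt h1) h2' hcon
                · exact Or.inr ⟨hy, Or.inr (Or.inl ⟨h1, by linarith⟩)⟩
                · exact Or.inr ⟨hy, Or.inr (Or.inr h1)⟩
              · rintro (rfl | ⟨hy, (⟨h1, h2⟩ | ⟨h1, h2⟩ | h1)⟩)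
                · exact ⟨hxhS, Or.inl ⟨hxpos, le_refl _⟩⟩
                · exact ⟨hy, Or.inl ⟨h1, by linarith⟩⟩
                · refine ⟨hy, Or.inr (Or.inl ⟨h1, ?_⟩)⟩
                  have hyx : y ≠ xh := by
                    intro hcon; rw [hcon] at h1; linarith
                  rcases lt_trichotomy (kap p a y) (kap p a xh) with h | h | h
                  · exact h
                  · exact absurd h (huniq y hy xh hxhS (ne_of_lt h1) hxh0 hyx)
                  · exact (hgap y hy (ne_of_lt h1) h h2).elim
                · exact ⟨hy, Or.inr (Or.inr h1)⟩
            rw [hins, Finset.card_insert_of_notMem]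
            intro hcon
            have := (Finset.mem_filter.1 hcon).2
            rcases this with ⟨h1, h2⟩ | ⟨h1, _⟩ | ⟨h1, _⟩
            · linarith
            · linarith
            · linarith
          have hrec := ih (kap p a xh) c₂ hxlo hcard' (by omega) hpre
          obtain ⟨x, hx1, hx2, hx3, hx4, hx5⟩ := hrec
          exact ⟨x, hx1, hx2, hx3, by linarith, hx5⟩




noncomputable def bey (v p y : Pt) : ℝ :=
  (y.1 - p.1) * (p.1 - v.1) + (y.2 - p.2) * (p.2 - v.2)

noncomputable def rhoP (S : Finset Pt) (c p : Pt) : ℕ :=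
  (S.filter (fun y => det3 c p y < 0 ∨ (det3 c p y = 0 ∧ y ≠ p ∧ 0 < bey c p y))).card

noncomputable def rhoM (S : Finset Pt) (b p : Pt) : ℕ :=
  (S.filter (fun y => 0 < det3 b p y ∨ (det3 b p y = 0 ∧ y ≠ p ∧ 0 < bey b p y))).card

def IsComb (a b c x : Pt) (l₁ l₂ l₃ : ℝ) : Prop :=
  0 ≤ l₁ ∧ 0 ≤ l₂ ∧ 0 ≤ l₃ ∧ l₁ + l₂ + l₃ = 1 ∧
    x.1 = l₁ * a.1 + l₂ * b.1 + l₃ * c.1 ∧ x.2 = l₁ * a.2 + l₂ * b.2 + l₃ * c.2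

lemma exists_coeffs {a b c x : Pt} (hx : x ∈ convexHull ℝ ({a, b, c} : Set Pt)) :
    ∃ l₁ l₂ l₃ : ℝ, IsComb a b c x l₁ l₂ l₃ := by
  rw [convexHull_insert ⟨b, by simp⟩, convexJoin_singleton_left] at hx
  simp only [Set.mem_iUnion] at hx
  obtain ⟨z, hz, hxz⟩ := hx
  rw [convexHull_pair] at hz
  obtain ⟨u, v, hu, hv, huv, hz⟩ := hz
  obtain ⟨s, t, hs, ht, hst, hxz⟩ := hxz
  refine ⟨s, t * u, t * v, hs, mul_nonneg ht hu, mul_nonneg ht hv, by nlinarith, ?_, ?_⟩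
  · have h1 : (s • a + t • z).1 = x.1 := by rw [hxz]
    have h2 : (u • b + v • c).1 = z.1 := by rw [hz]
    simp only [Prod.fst_add, Prod.smul_fst, smul_eq_mul] at h1 h2
    nlinarith [h1, h2]
  · have h1 : (s • a + t • z).2 = x.2 := by rw [hxz]
    have h2 : (u • b + v • c).2 = z.2 := by rw [hz]
    simp only [Prod.snd_add, Prod.smul_snd, smul_eq_mul] at h1 h2
    nlinarith [h1, h2]

section Formulas

variable {a b c x y : Pt} {l₁ l₂ l₃ m₁ m₂ m₃ : ℝ}

lemma comb_det_ab (h : IsComb a b c x l₁ l₂ l₃) : det3 a b x = l₃ * det3 a b c := by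
  obtain ⟨_, _, _, hsum, h1, h2⟩ := h
  simp only [det3]
  rw [h1, h2]
  linear_combination (((b.1 - a.1) * a.2 - (b.2 - a.2) * a.1) : ℝ) * hsum
lemma comb_det_bc (h : IsComb a b c x l₁ l₂ l₃) : det3 b c x = l₁ * det3 a b c := by
  obtain ⟨_, _, _, hsum, h1, h2⟩ := h
  simp only [det3]
  rw [h1, h2]
  linear_combination (((c.1 - b.1) * b.2 - (c.2 - b.2) * b.1) : ℝ) * hsum
lemma comb_det_ca (h : IsComb a b c x l₁ l₂ l₃) : det3 c a x = l₂ * det3 a b c := by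
  obtain ⟨_, _, _, hsum, h1, h2⟩ := h
  simp only [det3]
  rw [h1, h2]
  linear_combination (((a.1 - c.1) * c.2 - (a.2 - c.2) * c.1) : ℝ) * hsum

lemma comb_det_cpy (hp : IsComb a b c x l₁ l₂ l₃) (hy : IsComb a b c y m₁ m₂ m₃) :
    det3 c x y = (l₁ * m₂ - l₂ * m₁) * det3 a b c := by
  obtain ⟨_, _, _, hsum, h1, h2⟩ := hp
  obtain ⟨_, _, _, hsum', h1', h2'⟩ := hy
  simp only [det3]
  rw [h1, h2, h1', h2']
  linear_combination (((l₁*(a.1-c.1)+l₂*(b.1-c.1))*c.2 - (l₁*(a.2-c.2)+l₂*(b.2-c.2))*c.1) : ℝ) * hsum'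
    + ((m₁*((a.2-c.2))*c.1 + m₂*((b.2-c.2))*c.1 - m₁*((a.1-c.1))*c.2 - m₂*((b.1-c.1))*c.2) : ℝ) * hsum

lemma comb_det_bpy (hp : IsComb a b c x l₁ l₂ l₃) (hy : IsComb a b c y m₁ m₂ m₃) :
    det3 b x y = (l₃ * m₁ - l₁ * m₃) * det3 a b c := by
  obtain ⟨_, _, _, hsum, h1, h2⟩ := hp
  obtain ⟨_, _, _, hsum', h1', h2'⟩ := hy
  simp only [det3]
  rw [h1, h2, h1', h2']
  linear_combination (((l₃*(c.1-b.1)+l₁*(a.1-b.1))*b.2 - (l₃*(c.2-b.2)+l₁*(a.2-b.2))*b.1) : ℝ) * hsum'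
    + ((m₃*((c.2-b.2))*b.1 + m₁*((a.2-b.2))*b.1 - m₃*((c.1-b.1))*b.2 - m₁*((a.1-b.1))*b.2) : ℝ) * hsum

end Formulas




section Rank

variable {S : Finset Pt} {a b c : Pt}

lemma comb_r_pos {x : Pt} {l₁ l₂ l₃ : ℝ} (h : IsComb a b c x l₁ l₂ l₃) (hxc : x ≠ c) :
    0 < l₁ + l₂ := by
  rcases lt_or_eq_of_le (by linarith [h.1, h.2.1] : (0:ℝ) ≤ l₁ + l₂) with h1 | h1
  · exact h1
  · exfalso
    have hl1 : l₁ = 0 := by linarith [h.1, h.2.1]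
    have hl2 : l₂ = 0 := by linarith [h.1, h.2.1]
    have hl3 : l₃ = 1 := by linarith [h.2.2.2.1]
    apply hxc
    apply Prod.ext
    · rw [h.2.2.2.2.1, hl1, hl2, hl3]; ring
    · rw [h.2.2.2.2.2, hl1, hl2, hl3]; ring

lemma comb_r13_pos {x : Pt} {l₁ l₂ l₃ : ℝ} (h : IsComb a b c x l₁ l₂ l₃) (hxb : x ≠ b) :
    0 < l₃ + l₁ := by
  rcases lt_or_eq_of_le (by linarith [h.1, h.2.2.1] : (0:ℝ) ≤ l₃ + l₁) with h1 | h1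
  · exact h1
  · exfalso
    have hl1 : l₁ = 0 := by linarith [h.1, h.2.2.1]
    have hl3 : l₃ = 0 := by linarith [h.1, h.2.2.1]
    have hl2 : l₂ = 1 := by linarith [h.2.2.2.1]
    apply hxb
    apply Prod.ext
    · rw [h.2.2.2.2.1, hl1, hl2, hl3]; ring
    · rw [h.2.2.2.2.2, hl1, hl2, hl3]; ring

lemma tie_bey_formula {v p y : Pt} {rp ry : ℝ}
    (h1 : rp * (y.1 - p.1) = (ry - rp) * (p.1 - v.1))
    (h2 : rp * (y.2 - p.2) = (ry - rp) * (p.2 - v.2)) :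
    rp * bey v p y = (ry - rp) * ipd v p p := by
  simp only [bey, ipd]
  linear_combination (p.1 - v.1) * h1 + (p.2 - v.2) * h2

theorem rhoP_rank (hgp : GenPos S) (hD : 0 < det3 a b c) (hc : c ∉ S)
    (l₁ l₂ l₃ : Pt → ℝ) (hl : ∀ x ∈ S, IsComb a b c x (l₁ x) (l₂ x) (l₃ x))
    (k : ℕ) (hk : k + 1 ≤ S.card) :
    k + 1 ≤ (S.filter (fun p => rhoP S c p ≤ k)).card := by
  classical
  set key : Pt → ℝ ×ₗ ℝ :=
    fun y => toLex (l₂ y / (l₁ y + l₂ y), -(l₁ y + l₂ y)) with hkey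
  have hr : ∀ y ∈ S, 0 < l₁ y + l₂ y := by
    intro y hy
    exact comb_r_pos (hl y hy) (by rintro rfl; exact hc hy)
  -- pointwise characterization
  have hpoint : ∀ p ∈ S, ∀ y ∈ S,
      ((det3 c p y < 0 ∨ (det3 c p y = 0 ∧ y ≠ p ∧ 0 < bey c p y)) ↔ key y < key p) := by
    intro p hp y hy
    have hrp := hr p hp
    have hry := hr y hy
    have hdet : det3 c p y = (l₁ p * l₂ y - l₂ p * l₁ y) * det3 a b c :=
      comb_det_cpy (hl p hp) (hl y hy)
    have hslt : l₂ y / (l₁ y + l₂ y) < l₂ p / (l₁ p + l₂ p) ↔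
        l₁ p * l₂ y - l₂ p * l₁ y < 0 := by
      rw [div_lt_div_iff₀ hry hrp]
      constructor <;> intro h <;> nlinarith
    have hseq : l₂ y / (l₁ y + l₂ y) = l₂ p / (l₁ p + l₂ p) ↔
        l₁ p * l₂ y - l₂ p * l₁ y = 0 := by
      rw [div_eq_div_iff (ne_of_gt hry) (ne_of_gt hrp)]
      constructor <;> intro h <;> nlinarith
    have hpc : p ≠ c := by rintro rfl; exact hc hp
    have hipd : 0 < ipd c p p := ipd_self_pos hpc
    constructor
    · rintro (h | ⟨h0, hyp, hbey⟩)
      · rw [hkey, Prod.Lex.lt_iff]; simp only [ofLex_toLex]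
        left
        rw [hslt]
        nlinarith [hdet]
      · rw [hkey, Prod.Lex.lt_iff]; simp only [ofLex_toLex]
        right
        have htie : l₁ p * l₂ y - l₂ p * l₁ y = 0 := by nlinarith [hdet]
        refine ⟨by rw [hseq]; exact htie, ?_⟩
        -- show r y > r p
        have hprop1 : (l₁ p + l₂ p) * (l₁ y) = (l₁ y + l₂ y) * (l₁ p) := by nlinarith
        have hprop2 : (l₁ p + l₂ p) * (l₂ y) = (l₁ y + l₂ y) * (l₂ p) := by nlinarith
        have hco1 : (l₁ p + l₂ p) * (y.1 - p.1)
            = ((l₁ y + l₂ y) - (l₁ p + l₂ p)) * (p.1 - c.1) := by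
          have e1 := (hl p hp).2.2.2.2.1
          have e2 := (hl y hy).2.2.2.2.1
          have s1 := (hl p hp).2.2.2.1
          have s2 := (hl y hy).2.2.2.1
          linear_combination (l₁ p + l₂ p) * e2 - (l₁ y + l₂ y) * e1 + a.1 * hprop1
            + b.1 * hprop2 + c.1 * (l₁ p + l₂ p) * s2 - c.1 * (l₁ y + l₂ y) * s1
        have hco2 : (l₁ p + l₂ p) * (y.2 - p.2)
            = ((l₁ y + l₂ y) - (l₁ p + l₂ p)) * (p.2 - c.2) := by
          have e1 := (hl p hp).2.2.2.2.2
          have e2 := (hl y hy).2.2.2.2.2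
          have s1 := (hl p hp).2.2.2.1
          have s2 := (hl y hy).2.2.2.1
          linear_combination (l₁ p + l₂ p) * e2 - (l₁ y + l₂ y) * e1 + a.2 * hprop1
            + b.2 * hprop2 + c.2 * (l₁ p + l₂ p) * s2 - c.2 * (l₁ y + l₂ y) * s1
        have hbf := tie_bey_formula hco1 hco2
        have : 0 < ((l₁ y + l₂ y) - (l₁ p + l₂ p)) * ipd c p p := by nlinarith
        have hgt : (l₁ p + l₂ p) < (l₁ y + l₂ y) := by nlinarith
        linarith
    · intro h
      rw [hkey, Prod.Lex.lt_iff] at h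
      rcases h with h | ⟨h1, h2⟩
      · left
        simp only [ofLex_toLex] at h; rw [hslt] at h
        nlinarith [hdet]
      · right
        simp only [ofLex_toLex] at h1 h2
        have htie : l₁ p * l₂ y - l₂ p * l₁ y = 0 := by rw [← hseq]; exact h1
        have hdet0 : det3 c p y = 0 := by rw [hdet, htie]; ring
        have hrylt : (l₁ p + l₂ p) < (l₁ y + l₂ y) := by linarith
        have hprop1 : (l₁ p + l₂ p) * (l₁ y) = (l₁ y + l₂ y) * (l₁ p) := by nlinarith
        have hprop2 : (l₁ p + l₂ p) * (l₂ y) = (l₁ y + l₂ y) * (l₂ p) := by nlinarith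
        have hco1 : (l₁ p + l₂ p) * (y.1 - p.1)
            = ((l₁ y + l₂ y) - (l₁ p + l₂ p)) * (p.1 - c.1) := by
          have e1 := (hl p hp).2.2.2.2.1
          have e2 := (hl y hy).2.2.2.2.1
          have s1 := (hl p hp).2.2.2.1
          have s2 := (hl y hy).2.2.2.1
          linear_combination (l₁ p + l₂ p) * e2 - (l₁ y + l₂ y) * e1 + a.1 * hprop1
            + b.1 * hprop2 + c.1 * (l₁ p + l₂ p) * s2 - c.1 * (l₁ y + l₂ y) * s1
        have hco2 : (l₁ p + l₂ p) * (y.2 - p.2)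
            = ((l₁ y + l₂ y) - (l₁ p + l₂ p)) * (p.2 - c.2) := by
          have e1 := (hl p hp).2.2.2.2.2
          have e2 := (hl y hy).2.2.2.2.2
          have s1 := (hl p hp).2.2.2.1
          have s2 := (hl y hy).2.2.2.1
          linear_combination (l₁ p + l₂ p) * e2 - (l₁ y + l₂ y) * e1 + a.2 * hprop1
            + b.2 * hprop2 + c.2 * (l₁ p + l₂ p) * s2 - c.2 * (l₁ y + l₂ y) * s1
        have hbf := tie_bey_formula hco1 hco2
        have hipd : 0 < ipd c p p := ipd_self_pos (by rintro rfl; exact hc hp)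
        have hbey : 0 < bey c p y := by nlinarith
        have hyp : y ≠ p := by
          intro hcon
          rw [hcon] at hrylt
          linarith
        exact ⟨hdet0, hyp, hbey⟩
  -- injectivity
  have hinj : Set.InjOn key S := by
    intro y hy p hp heq
    have hry := hr y hy
    have hrp := hr p hp
    rw [hkey] at heq
    have heq' : (l₂ y / (l₁ y + l₂ y), -(l₁ y + l₂ y)) = (l₂ p / (l₁ p + l₂ p), -(l₁ p + l₂ p)) :=
      toLex.injective heq
    have hs := congrArg Prod.fst heq'
    have hrr := congrArg Prod.snd heq'
    simp only at hs hrr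
    have hreq : l₁ y + l₂ y = l₁ p + l₂ p := by linarith
    have hl2 : l₂ y = l₂ p := by
      have h1 : l₂ y / (l₁ y + l₂ y) * (l₁ y + l₂ y) = l₂ y := div_mul_cancel₀ _ (ne_of_gt hry)
      have h2 : l₂ p / (l₁ p + l₂ p) * (l₁ p + l₂ p) = l₂ p := div_mul_cancel₀ _ (ne_of_gt hrp)
      rw [← h1, ← h2, hs, hreq]
    have hl1 : l₁ y = l₁ p := by linarith
    have hl3 : l₃ y = l₃ p := by
      have s1 := (hl y hy).2.2.2.1
      have s2 := (hl p hp).2.2.2.1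
      linarith
    apply Prod.ext
    · rw [(hl y hy).2.2.2.2.1, (hl p hp).2.2.2.2.1, hl1, hl2, hl3]
    · rw [(hl y hy).2.2.2.2.2, (hl p hp).2.2.2.2.2, hl1, hl2, hl3]
  have hmain := rank_lemma S key hinj k hk
  have hfeq : S.filter (fun p => (S.filter (fun y => key y < key p)).card ≤ k)
      = S.filter (fun p => rhoP S c p ≤ k) := by
    apply Finset.filter_congr
    intro p hp
    have : (S.filter (fun y => key y < key p)).card = rhoP S c p := by
      unfold rhoP
      congr 1
      apply Finset.filter_congr
      intro y hy
      exact (hpoint p hp y hy).symm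
    rw [this]
  rw [hfeq] at hmain
  exact hmain

theorem rhoM_rank (hgp : GenPos S) (hD : 0 < det3 a b c) (hb : b ∉ S)
    (l₁ l₂ l₃ : Pt → ℝ) (hl : ∀ x ∈ S, IsComb a b c x (l₁ x) (l₂ x) (l₃ x))
    (k : ℕ) (hk : k + 1 ≤ S.card) :
    k + 1 ≤ (S.filter (fun p => rhoM S b p ≤ k)).card := by
  classical
  set key : Pt → ℝ ×ₗ ℝ :=
    fun y => toLex (-(l₁ y / (l₃ y + l₁ y)), -(l₃ y + l₁ y)) with hkey
  have hr : ∀ y ∈ S, 0 < l₃ y + l₁ y := by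
    intro y hy
    exact comb_r13_pos (hl y hy) (by rintro rfl; exact hb hy)
  have hpoint : ∀ p ∈ S, ∀ y ∈ S,
      ((0 < det3 b p y ∨ (det3 b p y = 0 ∧ y ≠ p ∧ 0 < bey b p y)) ↔ key y < key p) := by
    intro p hp y hy
    have hrp := hr p hp
    have hry := hr y hy
    have hdet : det3 b p y = (l₃ p * l₁ y - l₁ p * l₃ y) * det3 a b c :=
      comb_det_bpy (hl p hp) (hl y hy)
    have hslt : -(l₁ y / (l₃ y + l₁ y)) < -(l₁ p / (l₃ p + l₁ p)) ↔
        0 < l₃ p * l₁ y - l₁ p * l₃ y := by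
      rw [neg_lt_neg_iff, div_lt_div_iff₀ hrp hry]
      constructor <;> intro h <;> nlinarith
    have hseq : -(l₁ y / (l₃ y + l₁ y)) = -(l₁ p / (l₃ p + l₁ p)) ↔
        l₃ p * l₁ y - l₁ p * l₃ y = 0 := by
      rw [neg_inj, div_eq_div_iff (ne_of_gt hry) (ne_of_gt hrp)]
      constructor <;> intro h <;> nlinarith
    have hpb : p ≠ b := by rintro rfl; exact hb hp
    have hipd : 0 < ipd b p p := ipd_self_pos hpb
    constructor
    · rintro (h | ⟨h0, hyp, hbey⟩)
      · rw [hkey, Prod.Lex.lt_iff]; simp only [ofLex_toLex]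
        left
        rw [hslt]
        nlinarith [hdet]
      · rw [hkey, Prod.Lex.lt_iff]; simp only [ofLex_toLex]
        right
        have htie : l₃ p * l₁ y - l₁ p * l₃ y = 0 := by nlinarith [hdet]
        refine ⟨by rw [hseq]; exact htie, ?_⟩
        have hprop1 : (l₃ p + l₁ p) * (l₃ y) = (l₃ y + l₁ y) * (l₃ p) := by nlinarith
        have hprop2 : (l₃ p + l₁ p) * (l₁ y) = (l₃ y + l₁ y) * (l₁ p) := by nlinarith
        have hco1 : (l₃ p + l₁ p) * (y.1 - p.1)
            = ((l₃ y + l₁ y) - (l₃ p + l₁ p)) * (p.1 - b.1) := by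
          have e1 := (hl p hp).2.2.2.2.1
          have e2 := (hl y hy).2.2.2.2.1
          have s1 := (hl p hp).2.2.2.1
          have s2 := (hl y hy).2.2.2.1
          linear_combination (l₃ p + l₁ p) * e2 - (l₃ y + l₁ y) * e1 + a.1 * hprop2
            + c.1 * hprop1 + b.1 * (l₃ p + l₁ p) * s2 - b.1 * (l₃ y + l₁ y) * s1
        have hco2 : (l₃ p + l₁ p) * (y.2 - p.2)
            = ((l₃ y + l₁ y) - (l₃ p + l₁ p)) * (p.2 - b.2) := by
          have e1 := (hl p hp).2.2.2.2.2
          have e2 := (hl y hy).2.2.2.2.2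
          have s1 := (hl p hp).2.2.2.1
          have s2 := (hl y hy).2.2.2.1
          linear_combination (l₃ p + l₁ p) * e2 - (l₃ y + l₁ y) * e1 + a.2 * hprop2
            + c.2 * hprop1 + b.2 * (l₃ p + l₁ p) * s2 - b.2 * (l₃ y + l₁ y) * s1
        have hbf := tie_bey_formula hco1 hco2
        have : 0 < ((l₃ y + l₁ y) - (l₃ p + l₁ p)) * ipd b p p := by nlinarith
        have hgt : (l₃ p + l₁ p) < (l₃ y + l₁ y) := by nlinarith
        linarith
    · intro h
      rw [hkey, Prod.Lex.lt_iff] at h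
      rcases h with h | ⟨h1, h2⟩
      · left
        simp only [ofLex_toLex] at h; rw [hslt] at h
        nlinarith [hdet]
      · right
        simp only [ofLex_toLex] at h1 h2
        have htie : l₃ p * l₁ y - l₁ p * l₃ y = 0 := by rw [← hseq]; exact h1
        have hdet0 : det3 b p y = 0 := by rw [hdet, htie]; ring
        have hrylt : (l₃ p + l₁ p) < (l₃ y + l₁ y) := by linarith
        have hprop1 : (l₃ p + l₁ p) * (l₃ y) = (l₃ y + l₁ y) * (l₃ p) := by nlinarith
        have hprop2 : (l₃ p + l₁ p) * (l₁ y) = (l₃ y + l₁ y) * (l₁ p) := by nlinarith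
        have hco1 : (l₃ p + l₁ p) * (y.1 - p.1)
            = ((l₃ y + l₁ y) - (l₃ p + l₁ p)) * (p.1 - b.1) := by
          have e1 := (hl p hp).2.2.2.2.1
          have e2 := (hl y hy).2.2.2.2.1
          have s1 := (hl p hp).2.2.2.1
          have s2 := (hl y hy).2.2.2.1
          linear_combination (l₃ p + l₁ p) * e2 - (l₃ y + l₁ y) * e1 + a.1 * hprop2
            + c.1 * hprop1 + b.1 * (l₃ p + l₁ p) * s2 - b.1 * (l₃ y + l₁ y) * s1
        have hco2 : (l₃ p + l₁ p) * (y.2 - p.2)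
            = ((l₃ y + l₁ y) - (l₃ p + l₁ p)) * (p.2 - b.2) := by
          have e1 := (hl p hp).2.2.2.2.2
          have e2 := (hl y hy).2.2.2.2.2
          have s1 := (hl p hp).2.2.2.1
          have s2 := (hl y hy).2.2.2.1
          linear_combination (l₃ p + l₁ p) * e2 - (l₃ y + l₁ y) * e1 + a.2 * hprop2
            + c.2 * hprop1 + b.2 * (l₃ p + l₁ p) * s2 - b.2 * (l₃ y + l₁ y) * s1
        have hbf := tie_bey_formula hco1 hco2
        have hipd2 : 0 < ipd b p p := ipd_self_pos (by rintro rfl; exact hb hp)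
        have hbey : 0 < bey b p y := by nlinarith
        have hyp : y ≠ p := by
          intro hcon
          rw [hcon] at hrylt
          linarith
        exact ⟨hdet0, hyp, hbey⟩
  have hinj : Set.InjOn key S := by
    intro y hy p hp heq
    have hry := hr y hy
    have hrp := hr p hp
    rw [hkey] at heq
    have heq' : (-(l₁ y / (l₃ y + l₁ y)), -(l₃ y + l₁ y))
        = (-(l₁ p / (l₃ p + l₁ p)), -(l₃ p + l₁ p)) := toLex.injective heq
    have hs := congrArg Prod.fst heq'
    have hrr := congrArg Prod.snd heq'
    simp only at hs hrr
    have hreq : l₃ y + l₁ y = l₃ p + l₁ p := by linarith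
    have hsx : l₁ y / (l₃ y + l₁ y) = l₁ p / (l₃ p + l₁ p) := by linarith
    have hl1 : l₁ y = l₁ p := by
      have h1 : l₁ y / (l₃ y + l₁ y) * (l₃ y + l₁ y) = l₁ y := div_mul_cancel₀ _ (ne_of_gt hry)
      have h2 : l₁ p / (l₃ p + l₁ p) * (l₃ p + l₁ p) = l₁ p := div_mul_cancel₀ _ (ne_of_gt hrp)
      rw [← h1, ← h2, hsx, hreq]
    have hl3 : l₃ y = l₃ p := by linarith
    have hl2 : l₂ y = l₂ p := by
      have s1 := (hl y hy).2.2.2.1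
      have s2 := (hl p hp).2.2.2.1
      linarith
    apply Prod.ext
    · rw [(hl y hy).2.2.2.2.1, (hl p hp).2.2.2.2.1, hl1, hl2, hl3]
    · rw [(hl y hy).2.2.2.2.2, (hl p hp).2.2.2.2.2, hl1, hl2, hl3]
  have hmain := rank_lemma S key hinj k hk
  have hfeq : S.filter (fun p => (S.filter (fun y => key y < key p)).card ≤ k)
      = S.filter (fun p => rhoM S b p ≤ k) := by
    apply Finset.filter_congr
    intro p hp
    have : (S.filter (fun y => key y < key p)).card = rhoM S b p := by
      unfold rhoM
      congr 1
      apply Finset.filter_congr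
      intro y hy
      exact (hpoint p hp y hy).symm
    rw [this]
  rw [hfeq] at hmain
  exact hmain


end Rank



lemma det3_abb (a b : Pt) : det3 a b b = 0 := by simp only [det3]; ring

lemma collinear3 {v w y1 y2 y3 : Pt} (hvw : w ≠ v)
    (h1 : det3 v w y1 = 0) (h2 : det3 v w y2 = 0) (h3 : det3 v w y3 = 0)
    (hy1 : y1 ≠ v) (hy2 : y2 ≠ v) (hy3 : y3 ≠ v) : det3 y1 y2 y3 = 0 := by
  obtain ⟨t1, _, ht11, ht12⟩ := collinear_param hvw h1 hy1
  obtain ⟨t2, _, ht21, ht22⟩ := collinear_param hvw h2 hy2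
  obtain ⟨t3, _, ht31, ht32⟩ := collinear_param hvw h3 hy3
  have a1 : y2.1 - y1.1 = (t2 - t1) * (w.1 - v.1) := by nlinarith [ht11, ht21]
  have a2 : y2.2 - y1.2 = (t2 - t1) * (w.2 - v.2) := by nlinarith [ht12, ht22]
  have b1 : y3.1 - y1.1 = (t3 - t1) * (w.1 - v.1) := by nlinarith [ht11, ht31]
  have b2 : y3.2 - y1.2 = (t3 - t1) * (w.2 - v.2) := by nlinarith [ht12, ht32]
  simp only [det3]
  rw [a1, a2, b1, b2]
  ring

section Excl

variable {S : Finset Pt} {a b c : Pt}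

theorem rho_sum (hgp : GenPos S) {v : Pt} (hv : v ∉ S) {p : Pt} (hp : p ∈ S) :
    S.card ≤ 2 + (rhoP S v p + rhoM S v p) := by
  classical
  have hvp : p ≠ v := by rintro rfl; exact hv hp
  set Z := S.filter (fun y => det3 v p y = 0) with hZ
  have hZ2 : Z.card ≤ 2 := by
    by_contra hcon
    push_neg at hcon
    obtain ⟨y1, y2, y3, hy1, hy2, hy3, h12, h13, h23⟩ := Finset.two_lt_card_iff.1 hcon
    have m1 := Finset.mem_filter.1 hy1
    have m2 := Finset.mem_filter.1 hy2
    have m3 := Finset.mem_filter.1 hy3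
    have hcol := collinear3 hvp m1.2 m2.2 m3.2
      (by rintro rfl; exact hv m1.1) (by rintro rfl; exact hv m2.1) (by rintro rfl; exact hv m3.1)
    exact hgp y1 m1.1 y2 m2.1 y3 m3.1 h12 h13 h23 hcol
  set A := S.filter (fun y => det3 v p y < 0 ∨ (det3 v p y = 0 ∧ y ≠ p ∧ 0 < bey v p y)) with hA
  set B := S.filter (fun y => 0 < det3 v p y ∨ (det3 v p y = 0 ∧ y ≠ p ∧ 0 < bey v p y)) with hB
  have hcover : S ⊆ Z ∪ (A ∪ B) := by
    intro y hy
    rcases lt_trichotomy (det3 v p y) 0 with h | h | h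
    · exact Finset.mem_union.2 (Or.inr (Finset.mem_union.2 (Or.inl
        (Finset.mem_filter.2 ⟨hy, Or.inl h⟩))))
    · exact Finset.mem_union.2 (Or.inl (Finset.mem_filter.2 ⟨hy, h⟩))
    · exact Finset.mem_union.2 (Or.inr (Finset.mem_union.2 (Or.inr
        (Finset.mem_filter.2 ⟨hy, Or.inl h⟩))))
  have hc1 : S.card ≤ (Z ∪ (A ∪ B)).card := Finset.card_le_card hcover
  have hc2 : (Z ∪ (A ∪ B)).card ≤ Z.card + (A ∪ B).card := Finset.card_union_le _ _
  have hc3 : (A ∪ B).card ≤ A.card + B.card := Finset.card_union_le _ _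
  have hrA : rhoP S v p = A.card := rfl
  have hrB : rhoM S v p = B.card := rfl
  omega

theorem excl_bc (hgp : GenPos S) (hD : 0 < det3 a b c) (hb : b ∉ S) (hc : c ∉ S)
    (l₁ l₂ l₃ : Pt → ℝ) (hl : ∀ x ∈ S, IsComb a b c x (l₁ x) (l₂ x) (l₃ x))
    {k : ℕ} (hkn : 2*k+3 ≤ S.card) {p : Pt} (hp : p ∈ S) (hlow : rhoP S c p ≤ k) :
    det3 b c p ≠ 0 := by
  classical
  intro hon
  have hl1p : l₁ p = 0 := by
    have := comb_det_bc (hl p hp)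
    rw [hon] at this
    nlinarith [this]
  have hl2p : 0 < l₂ p := by
    rcases lt_or_eq_of_le (hl p hp).2.1 with h | h
    · exact h
    · exfalso
      apply hc
      have h3 : l₃ p = 1 := by have := (hl p hp).2.2.2.1; linarith
      have e1 := (hl p hp).2.2.2.2.1
      have e2 := (hl p hp).2.2.2.2.2
      have : p = c := Prod.ext (by rw [e1, hl1p, ← h, h3]; ring) (by rw [e2, hl1p, ← h, h3]; ring)
      rwa [← this]
  -- points strictly inside side bc are all counted by rhoP
  have hsub : S.filter (fun y => 0 < det3 b c y) ⊆
      S.filter (fun y => det3 c p y < 0 ∨ (det3 c p y = 0 ∧ y ≠ p ∧ 0 < bey c p y)) := by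
    intro y hy
    have hy1 := (Finset.mem_filter.1 hy).1
    have hy2 := (Finset.mem_filter.1 hy).2
    refine Finset.mem_filter.2 ⟨hy1, Or.inl ?_⟩
    have hdet := comb_det_cpy (hl p hp) (hl y hy1)
    have hl1y : 0 < l₁ y := by
      have := comb_det_bc (hl y hy1)
      nlinarith [this, hy2]
    rw [hdet, hl1p]
    nlinarith [mul_pos (mul_pos hl2p hl1y) hD]
  -- at most 2 points on the line bc
  have hbc : c ≠ b := by
    intro h
    rw [h, det3_abb] at hD
    linarith
  have hZ2 : (S.filter (fun y => det3 b c y = 0)).card ≤ 2 := by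
    by_contra hcon
    push_neg at hcon
    obtain ⟨y1, y2, y3, hy1, hy2, hy3, h12, h13, h23⟩ := Finset.two_lt_card_iff.1 hcon
    have m1 := Finset.mem_filter.1 hy1
    have m2 := Finset.mem_filter.1 hy2
    have m3 := Finset.mem_filter.1 hy3
    have hcol := collinear3 hbc m1.2 m2.2 m3.2
      (by rintro rfl; exact hb m1.1) (by rintro rfl; exact hb m2.1) (by rintro rfl; exact hb m3.1)
    exact hgp y1 m1.1 y2 m2.1 y3 m3.1 h12 h13 h23 hcol
  have hcover : S ⊆ (S.filter (fun y => det3 b c y = 0)) ∪ (S.filter (fun y => 0 < det3 b c y)) := by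
    intro y hy
    have hge : 0 ≤ det3 b c y := by
      have := comb_det_bc (hl y hy)
      nlinarith [(hl y hy).1]
    rcases lt_or_eq_of_le hge with h | h
    · exact Finset.mem_union.2 (Or.inr (Finset.mem_filter.2 ⟨hy, h⟩))
    · exact Finset.mem_union.2 (Or.inl (Finset.mem_filter.2 ⟨hy, h.symm⟩))
  have h1 : S.card ≤ 2 + (S.filter (fun y => 0 < det3 b c y)).card := by
    calc S.card ≤ _ := Finset.card_le_card hcover
      _ ≤ (S.filter (fun y => det3 b c y = 0)).card + (S.filter (fun y => 0 < det3 b c y)).card :=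
        Finset.card_union_le _ _
      _ ≤ _ := by omega
  have h2 := Finset.card_le_card hsub
  unfold rhoP at hlow
  omega

theorem excl_ab (hgp : GenPos S) (hD : 0 < det3 a b c) (ha : a ∉ S) (hb : b ∉ S)
    (l₁ l₂ l₃ : Pt → ℝ) (hl : ∀ x ∈ S, IsComb a b c x (l₁ x) (l₂ x) (l₃ x))
    {k : ℕ} (hk1 : 1 ≤ k) {p : Pt} (hp : p ∈ S) (hhigh : k + 1 ≤ rhoM S b p) :
    det3 a b p ≠ 0 := by
  classical
  intro hon
  have hl3p : l₃ p = 0 := by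
    have := comb_det_ab (hl p hp)
    rw [hon] at this
    nlinarith [this]
  have hl1p : 0 < l₁ p := by
    rcases lt_or_eq_of_le (hl p hp).1 with h | h
    · exact h
    · exfalso
      apply hb
      have h3 : l₂ p = 1 := by have := (hl p hp).2.2.2.1; linarith
      have e1 := (hl p hp).2.2.2.2.1
      have e2 := (hl p hp).2.2.2.2.2
      have : p = b := Prod.ext (by rw [e1, ← h, hl3p, h3]; ring) (by rw [e2, ← h, hl3p, h3]; ring)
      rwa [← this]
  have hab : b ≠ a := by
    intro h
    rw [h] at hD
    rw [show det3 a a c = 0 from by simp only [det3]; ring] at hD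
    linarith
  have hsub : S.filter (fun y => 0 < det3 b p y ∨ (det3 b p y = 0 ∧ y ≠ p ∧ 0 < bey b p y)) ⊆
      S.filter (fun y => y ≠ p ∧ det3 a b y = 0) := by
    intro y hy
    have hy1 := (Finset.mem_filter.1 hy).1
    have hy2 := (Finset.mem_filter.1 hy).2
    have hdet := comb_det_bpy (hl p hp) (hl y hy1)
    rw [hl3p] at hdet
    have hl3y : 0 ≤ l₃ y := (hl y hy1).2.2.1
    have hnonpos : det3 b p y ≤ 0 := by
      rw [hdet]
      nlinarith [mul_nonneg (mul_nonneg (le_of_lt hl1p) hl3y) (le_of_lt hD)]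
    rcases hy2 with h | ⟨h0, hyp, _⟩
    · linarith
    · refine Finset.mem_filter.2 ⟨hy1, hyp, ?_⟩
      have : l₃ y = 0 := by
        rw [h0] at hdet
        by_contra hcon
        have h' : 0 < l₃ y := lt_of_le_of_ne hl3y (Ne.symm hcon)
        nlinarith [mul_pos (mul_pos hl1p h') hD]
      rw [comb_det_ab (hl y hy1), this]
      ring
  have hcard1 : (S.filter (fun y => y ≠ p ∧ det3 a b y = 0)).card ≤ 1 := by
    by_contra hcon
    push_neg at hcon
    obtain ⟨y1, hy1, y2, hy2, h12⟩ := Finset.one_lt_card.1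
      (show 1 < (S.filter (fun y => y ≠ p ∧ det3 a b y = 0)).card by omega)
    have m1 := Finset.mem_filter.1 hy1
    have m2 := Finset.mem_filter.1 hy2
    have hponline : det3 a b p = 0 := hon
    have hcol := collinear3 hab m1.2.2 m2.2.2 hponline
      (by rintro rfl; exact ha m1.1) (by rintro rfl; exact ha m2.1) (by rintro rfl; exact ha hp)
    exact hgp y1 m1.1 y2 m2.1 p hp h12 m1.2.1 m2.2.1 hcol
  have hEq : rhoM S b p = (S.filter (fun y => 0 < det3 b p y ∨
      (det3 b p y = 0 ∧ y ≠ p ∧ 0 < bey b p y))).card := rfl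
  have hle := Finset.card_le_card hsub
  rw [← hEq] at hle
  omega

end Excl



section Corner

variable {S : Finset Pt} {a b c : Pt}

lemma coll_det3_vpy {p a v y : Pt} {t : ℝ}
    (ht1 : y.1 - p.1 = t * (a.1 - p.1)) (ht2 : y.2 - p.2 = t * (a.2 - p.2)) :
    det3 v p y = t * det3 v p a := by
  simp only [det3]
  linear_combination (p.1 - v.1) * ht2 - (p.2 - v.2) * ht1

lemma coll_ipd {p a y : Pt} {t : ℝ}
    (ht1 : y.1 - p.1 = t * (a.1 - p.1)) (ht2 : y.2 - p.2 = t * (a.2 - p.2)) :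
    ipd p a y = t * ipd p a a := by
  simp only [ipd]
  linear_combination (a.1 - p.1) * ht1 + (a.2 - p.2) * ht2

lemma coll_det3_pay {p v y : Pt} {s : ℝ}
    (hs1 : y.1 - p.1 = s * (v.1 - p.1)) (hs2 : y.2 - p.2 = s * (v.2 - p.2)) (a : Pt) :
    det3 p a y = s * det3 p a v := by
  simp only [det3]
  linear_combination (a.1 - p.1) * hs2 - (a.2 - p.2) * hs1

lemma coll_bey {p v y : Pt} {s : ℝ}
    (hs1 : y.1 - p.1 = s * (v.1 - p.1)) (hs2 : y.2 - p.2 = s * (v.2 - p.2)) :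
    bey v p y = -s * ipd p v v := by
  simp only [bey, ipd]
  linear_combination (p.1 - v.1) * hs1 + (p.2 - v.2) * hs2

theorem corner_exists (hgp : GenPos S) (hD : 0 < det3 a b c)
    (ha : a ∉ S) (hb : b ∉ S) (hc : c ∉ S)
    (l₁ l₂ l₃ : Pt → ℝ) (hl : ∀ x ∈ S, IsComb a b c x (l₁ x) (l₂ x) (l₃ x))
    {k : ℕ} (hk1 : 1 ≤ k) (hkn : 2*k+3 ≤ S.card)
    {p : Pt} (hp : p ∈ S) (hlow : rhoP S c p ≤ k) (hhigh : k+1 ≤ rhoM S b p) :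
    ∃ x ∈ S, x ≠ p ∧ (S.filter (fun y => det3 p x y < 0)).card = k ∧
      det3 p x a < 0 ∧ 0 < det3 p x b ∧ 0 < det3 p x c := by
  classical
  have hap : a ≠ p := by rintro rfl; exact ha hp
  have hbp : b ≠ p := by rintro rfl; exact hb hp
  have hcp : c ≠ p := by rintro rfl; exact hc hp
  have huu : 0 < ipd p a a := ipd_self_pos hap
  have hexab : det3 a b p ≠ 0 := excl_ab hgp hD ha hb l₁ l₂ l₃ hl hk1 hp hhigh
  have hexbc : det3 b c p ≠ 0 := excl_bc hgp hD hb hc l₁ l₂ l₃ hl hkn hp hlow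
  have hl3p : 0 < l₃ p := by
    have h1 := comb_det_ab (hl p hp)
    have h2 : 0 ≤ l₃ p := (hl p hp).2.2.1
    rcases lt_or_eq_of_le h2 with h | h
    · exact h
    · exfalso; apply hexab; rw [h1, ← h]; ring
  have hl1p : 0 < l₁ p := by
    have h1 := comb_det_bc (hl p hp)
    have h2 : 0 ≤ l₁ p := (hl p hp).1
    rcases lt_or_eq_of_le h2 with h | h
    · exact h
    · exfalso; apply hexbc; rw [h1, ← h]; ring
  have hpab : 0 < det3 p a b := by
    rw [det3_cyc p a b]
    have h1 := comb_det_ab (hl p hp)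
    have h2 := (hl p hp).2.2.1
    nlinarith [h1, mul_pos hl3p hD]
  set kb := kap p a b with hkb
  -- uniqueness of kap values among S
  have huniq : ∀ y ∈ S, ∀ z ∈ S, det3 p a y ≠ 0 → det3 p a z ≠ 0 → y ≠ z →
      kap p a y ≠ kap p a z := by
    intro y hy z hz hy0 hz0 hyz hcon
    have h0 : det3 p y z = 0 := (det_pzy_eq_zero_iff hap hy0 hz0).2 hcon
    have hyp : y ≠ p := by rintro rfl; rw [det3_pap] at hy0; exact hy0 rfl
    have hzp : z ≠ p := by rintro rfl; rw [det3_pap] at hz0; exact hz0 rfl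
    exact hgp p hp y hy z hz (Ne.symm hyp) (Ne.symm hzp) hyz h0
  -- BRIDGE-LO : precnt at kap b equals rhoM
  have hbridgelo : precnt S p a kb = rhoM S b p := by
    unfold precnt rhoM
    congr 1
    apply Finset.filter_congr
    intro y hy
    by_cases hyp : y = p
    · constructor
      · rintro (⟨h1, _⟩ | ⟨h1, _⟩ | ⟨_, h2, _⟩)
        · rw [hyp, det3_pap p a] at h1; linarith
        · rw [hyp, det3_pap p a] at h1; linarith
        · exact absurd hyp h2
      · rintro (h1 | ⟨_, h2, _⟩)
        · rw [hyp, det3_pxx b p] at h1; linarith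
        · exact absurd hyp h2
    · by_cases hy0 : det3 p a y = 0
      · obtain ⟨t, ht0, ht1, ht2⟩ := collinear_param hap hy0 hyp
        have hbpy : det3 b p y = t * det3 p a b := by
          have := coll_det3_vpy (v := b) ht1 ht2
          rw [this]
          have : det3 b p a = det3 p a b := by rw [det3_cyc b p a]
          rw [this]
        have hipdy : ipd p a y = t * ipd p a a := coll_ipd ht1 ht2
        constructor
        · rintro (⟨h1, _⟩ | ⟨h1, _⟩ | ⟨_, _, h3⟩)
          · exact absurd hy0 (ne_of_gt h1)
          · exact absurd hy0 (ne_of_lt h1)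
          · left
            rw [hbpy]
            have ht : 0 < t := by nlinarith
            exact mul_pos ht hpab
        · rintro (h1 | ⟨h1, _, _⟩)
          · refine Or.inr (Or.inr ⟨hy0, hyp, ?_⟩)
            rw [hbpy] at h1
            have ht : 0 < t := by nlinarith
            rw [hipdy]
            exact mul_pos ht huu
          · exfalso
            rw [hbpy] at h1
            rcases mul_eq_zero.1 h1 with h | h
            · exact ht0 h
            · linarith
      · -- main case : y not collinear with the ray pa
        have hbpy : det3 b p y = -det3 p b y := by rw [det3_swap12 b p y]
        have hb0 : det3 p a b ≠ 0 := ne_of_gt hpab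
        have hniff := det_pzy_neg_iff hap hb0 hy0
        have heiff := det_pzy_eq_zero_iff hap hb0 hy0
        constructor
        · rintro (⟨h1, h2⟩ | ⟨h1, h2⟩ | ⟨h1, _, _⟩)
          · left
            rw [hbpy, neg_pos]
            rw [hniff]
            exact Or.inl ⟨hpab, h1, h2⟩
          · rcases lt_or_eq_of_le h2 with h2' | h2'
            · left
              rw [hbpy, neg_pos, hniff]
              exact Or.inr (Or.inl ⟨hpab, h1, h2'⟩)
            · -- tie : y on line pb, beyond
              right
              have h0 : det3 b p y = 0 := by
                rw [hbpy, neg_eq_zero, heiff]; exact h2'.symm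
              refine ⟨h0, hyp, ?_⟩
              have h0' : det3 p b y = 0 := by rw [heiff]; exact h2'.symm
              obtain ⟨s, hs0, hs1, hs2⟩ := collinear_param hbp h0' hyp
              have hdy : det3 p a y = s * det3 p a b := coll_det3_pay hs1 hs2 a
              have hsneg : s < 0 := by nlinarith
              have hbey : bey b p y = -s * ipd p b b := coll_bey hs1 hs2
              rw [hbey]
              have := ipd_self_pos hbp
              exact mul_pos (by linarith) this
          · exact absurd h1 hy0
        · rintro (h1 | ⟨h0, _, h3⟩)
          · rw [hbpy, neg_pos, hniff] at h1
            rcases h1 with ⟨_, h2, h3⟩ | ⟨_, h2, h3⟩ | ⟨hf, _⟩ | ⟨hf, _⟩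
            · exact Or.inl ⟨h2, h3⟩
            · exact Or.inr (Or.inl ⟨h2, le_of_lt h3⟩)
            · linarith
            · linarith
          · -- tie
            have h0' : det3 p b y = 0 := by
              rw [hbpy] at h0; linarith
            have hkk : kap p a b = kap p a y := heiff.1 h0'
            obtain ⟨s, hs0, hs1, hs2⟩ := collinear_param hbp h0' hyp
            have hdy : det3 p a y = s * det3 p a b := coll_det3_pay hs1 hs2 a
            have hbey : bey b p y = -s * ipd p b b := coll_bey hs1 hs2
            have hipdbb := ipd_self_pos hbp
            have hsneg : s < 0 := by nlinarith
            have hyneg : det3 p a y < 0 := by rw [hdy]; exact mul_neg_of_neg_of_pos hsneg hpab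
            exact Or.inr (Or.inl ⟨hyneg, le_of_eq hkk.symm⟩)
  -- event set bound for ivt
  have hmb : ∀ (c₁ c₂ : ℝ),
      (S.filter (fun y => det3 p a y ≠ 0 ∧ c₂ < kap p a y ∧ kap p a y < c₁)).card ≤ S.card :=
    fun _ _ => Finset.card_le_card (Finset.filter_subset _ _)
  by_cases hca0 : det3 c a p = 0
  · -- degenerate case : p on the line ca
    have hl2p0 : l₂ p = 0 := by
      have h1 := comb_det_ca (hl p hp)
      rw [hca0] at h1
      nlinarith [h1]
    have e1 := (hl p hp).2.2.2.2.1
    have e2 := (hl p hp).2.2.2.2.2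
    have s1 := (hl p hp).2.2.2.1
    have hcc1 : l₃ p * (c.1 - p.1) + l₁ p * (a.1 - p.1) = 0 := by
      linear_combination (-1 : ℝ) * e1 - p.1 * s1 + (p.1 - b.1) * hl2p0
    have hcc2 : l₃ p * (c.2 - p.2) + l₁ p * (a.2 - p.2) = 0 := by
      linear_combination (-1 : ℝ) * e2 - p.2 * s1 + (p.2 - b.2) * hl2p0
    have LB : ∀ y : Pt, l₃ p * det3 c p y = l₁ p * det3 p a y := by
      intro y
      simp only [det3]
      linear_combination (p.2 - y.2) * hcc1 + (y.1 - p.1) * hcc2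
    have LB2 : ∀ y : Pt, l₃ p * bey c p y = l₁ p * ipd p a y := by
      intro y
      simp only [bey, ipd]
      linear_combination (-(y.1 - p.1)) * hcc1 - (y.2 - p.2) * hcc2
    have LB3 : ∀ x : Pt, l₃ p * det3 p x c = l₁ p * det3 p a x := by
      intro x
      simp only [det3]
      linear_combination (-(x.2 - p.2)) * hcc1 + (x.1 - p.1) * hcc2
    set M := insert kb ((S.filter (fun y => det3 p a y ≠ 0)).image (kap p a)) with hM
    have hMne : M.Nonempty := Finset.insert_nonempty _ _
    set c₁ := M.max' hMne + 1 with hc₁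
    have hkbc1 : kb < c₁ := by
      have := Finset.le_max' M kb (Finset.mem_insert_self _ _)
      linarith
    have hyc1 : ∀ y ∈ S, det3 p a y ≠ 0 → kap p a y < c₁ := by
      intro y hy hy0
      have : kap p a y ∈ M := Finset.mem_insert.2 (Or.inr
        (Finset.mem_image.2 ⟨y, Finset.mem_filter.2 ⟨hy, hy0⟩, rfl⟩))
      have := Finset.le_max' M _ this
      linarith
    have hbridgehi : fcnt S p a c₁ = rhoP S c p := by
      unfold fcnt rhoP
      congr 1
      apply Finset.filter_congr
      intro y hy
      constructor
      · rintro (⟨h1, h2⟩ | ⟨h1, _⟩ | ⟨h1, h2, h3⟩)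
        · exact absurd h2 (not_le.2 (hyc1 y hy (ne_of_gt h1)))
        · left
          have := LB y
          nlinarith [this]
        · right
          refine ⟨?_, h2, ?_⟩
          · have := LB y
            rw [h1] at this
            nlinarith [this]
          · have := LB2 y
            nlinarith [this]
      · rintro (h1 | ⟨h0, h2, h3⟩)
        · refine Or.inr (Or.inl ⟨?_, ?_⟩)
          · nlinarith [LB y]
          · apply hyc1 y hy
            intro hcon
            nlinarith [LB y]
        · refine Or.inr (Or.inr ⟨?_, h2, ?_⟩)
          · nlinarith [LB y]
          · nlinarith [LB2 y]
    obtain ⟨x, hxS, hxpos, hxlo, hxhi, hxR⟩ := ivt S p a k hap huniq S.card c₁ kb hkbc1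
      (hmb c₁ kb) (by rw [hbridgehi]; exact hlow) (by rw [hbridgelo]; exact hhigh)
    refine ⟨x, hxS, ?_, hxR, ?_, ?_, ?_⟩
    · rintro rfl
      rw [det3_pap] at hxpos
      linarith
    · rw [det3_swap23 p x a]
      linarith
    · have hb0 : det3 p a b ≠ 0 := ne_of_gt hpab
      have : det3 p b x < 0 := (det_pzy_neg_iff hap hb0 (ne_of_gt hxpos)).2
        (Or.inl ⟨hpab, hxpos, hxlo⟩)
      rw [det3_swap23 p x b]
      linarith
    · nlinarith [LB3 x]
  · -- main case : p not on the line ca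
    have hl2p : 0 < l₂ p := by
      have h1 := comb_det_ca (hl p hp)
      have h2 : 0 ≤ l₂ p := (hl p hp).2.1
      rcases lt_or_eq_of_le h2 with h | h
      · exact h
      · exfalso; apply hca0; rw [h1, ← h]; ring
    have hpac : det3 p a c < 0 := by
      have h1 : det3 p a c = -det3 c a p := by
        rw [det3_cyc p a c, det3_swap12 a c p]
      have h2 := comb_det_ca (hl p hp)
      rw [h1, h2]
      nlinarith [mul_pos hl2p hD]
    have hc0 : det3 p a c ≠ 0 := ne_of_lt hpac
    have hb0 : det3 p a b ≠ 0 := ne_of_gt hpab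
    set kc := kap p a c with hkc
    have horder : kb < kc := by
      have h := kap_sub hb0 hc0
      have h1 : 0 < det3 p b c := by
        rw [show det3 p b c = det3 b c p from det3_cyc p b c]
        have := comb_det_bc (hl p hp)
        rw [this]
        exact mul_pos hl1p hD
      nlinarith [mul_pos huu h1, mul_neg_of_pos_of_neg hpab hpac]
    have hbridgehi : fcnt S p a kc = rhoP S c p := by
      unfold fcnt rhoP
      congr 1
      apply Finset.filter_congr
      intro y hy
      by_cases hyp : y = p
      · constructor
        · rintro (⟨h1, _⟩ | ⟨h1, _⟩ | ⟨_, h2, _⟩)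
          · rw [hyp, det3_pap p a] at h1; linarith
          · rw [hyp, det3_pap p a] at h1; linarith
          · exact absurd hyp h2
        · rintro (h1 | ⟨_, h2, _⟩)
          · rw [hyp, det3_pxx c p] at h1; linarith
          · exact absurd hyp h2
      · by_cases hy0 : det3 p a y = 0
        · obtain ⟨t, ht0, ht1, ht2⟩ := collinear_param hap hy0 hyp
          have hcpy : det3 c p y = t * det3 p a c := by
            have := coll_det3_vpy (v := c) ht1 ht2
            rw [this, show det3 c p a = det3 p a c from det3_cyc c p a]
          have hipdy : ipd p a y = t * ipd p a a := coll_ipd ht1 ht2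
          constructor
          · rintro (⟨h1, _⟩ | ⟨h1, _⟩ | ⟨_, _, h3⟩)
            · exact absurd hy0 (ne_of_gt h1)
            · exact absurd hy0 (ne_of_lt h1)
            · left
              rw [hcpy]
              have ht : 0 < t := by nlinarith
              exact mul_neg_of_pos_of_neg ht hpac
          · rintro (h1 | ⟨h1, _, _⟩)
            · refine Or.inr (Or.inr ⟨hy0, hyp, ?_⟩)
              rw [hcpy] at h1
              have ht : 0 < t := by nlinarith
              rw [hipdy]
              exact mul_pos ht huu
            · exfalso
              rw [hcpy] at h1
              rcases mul_eq_zero.1 h1 with h | h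
              · exact ht0 h
              · linarith
        · -- main case
          have hcpy : det3 c p y = -det3 p c y := by rw [det3_swap12 c p y]
          have hniff := det_pzy_neg_iff hap hc0 hy0
          have heiff := det_pzy_eq_zero_iff hap hc0 hy0
          constructor
          · rintro (⟨h1, h2⟩ | ⟨h1, h2⟩ | ⟨h1, _, _⟩)
            · rcases lt_or_eq_of_le h2 with h2' | h2'
              · left
                rw [hcpy, neg_lt, neg_zero]
                rcases lt_trichotomy (det3 p c y) 0 with h | h | h
                · rw [hniff] at h
                  rcases h with ⟨hf, _⟩ | ⟨hf, _⟩ | ⟨_, _, h3⟩ | ⟨_, hf, _⟩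
                  · linarith
                  · linarith
                  · linarith
                  · linarith
                · rw [heiff] at h
                  rw [← hkc] at h
                  linarith
                · exact h
              · -- tie : y on line pc, check beyond
                right
                have h0' : det3 p c y = 0 := by rw [heiff, ← hkc]; exact h2'
                have h0 : det3 c p y = 0 := by rw [hcpy, h0', neg_zero]
                refine ⟨h0, hyp, ?_⟩
                obtain ⟨s, hs0, hs1, hs2⟩ := collinear_param hcp h0' hyp
                have hdy : det3 p a y = s * det3 p a c := coll_det3_pay hs1 hs2 a
                have hsneg : s < 0 := by nlinarith
                have hbey : bey c p y = -s * ipd p c c := coll_bey hs1 hs2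
                rw [hbey]
                exact mul_pos (by linarith) (ipd_self_pos hcp)
            · left
              rw [hcpy, neg_lt, neg_zero]
              rcases lt_trichotomy (det3 p c y) 0 with h | h | h
              · rw [hniff] at h
                rcases h with ⟨hf, _⟩ | ⟨hf, _⟩ | ⟨_, hf, _⟩ | ⟨_, _, h3⟩
                · linarith
                · linarith
                · linarith
                · rw [← hkc] at h3; linarith
              · rw [heiff, ← hkc] at h
                linarith
              · exact h
            · exact absurd h1 hy0
          · rintro (h1 | ⟨h0, _, h3⟩)
            · rw [hcpy, neg_lt, neg_zero] at h1
              rcases lt_or_gt_of_ne hy0 with hyneg | hypos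
              · refine Or.inr (Or.inl ⟨hyneg, ?_⟩)
                rcases lt_trichotomy (kap p a y) kc with h | h | h
                · exact h
                · exfalso
                  have : det3 p c y = 0 := by rw [heiff, ← hkc]; exact h.symm
                  linarith
                · exfalso
                  have : det3 p c y < 0 := by
                    rw [hniff]
                    exact Or.inr (Or.inr (Or.inr ⟨hpac, hyneg, by rw [← hkc]; exact h⟩))
                  linarith
              · refine Or.inl ⟨hypos, ?_⟩
                rcases lt_trichotomy (kap p a y) kc with h | h | h
                · exfalso
                  have : det3 p c y < 0 := by
                    rw [hniff]
                    exact Or.inr (Or.inr (Or.inl ⟨hpac, hypos, by rw [← hkc]; exact h⟩))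
                  linarith
                · linarith
                · linarith
            · -- tie backward
              have h0' : det3 p c y = 0 := by rw [hcpy] at h0; linarith
              have hkk : kc = kap p a y := by rw [hkc]; exact heiff.1 h0'
              obtain ⟨s, hs0, hs1, hs2⟩ := collinear_param hcp h0' hyp
              have hdy : det3 p a y = s * det3 p a c := coll_det3_pay hs1 hs2 a
              have hbey : bey c p y = -s * ipd p c c := coll_bey hs1 hs2
              have hipdcc := ipd_self_pos hcp
              have hsneg : s < 0 := by nlinarith
              have hypos : 0 < det3 p a y := by
                rw [hdy]
                exact mul_pos_of_neg_of_neg hsneg hpac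
              exact Or.inl ⟨hypos, le_of_eq hkk⟩
    obtain ⟨x, hxS, hxpos, hxlo, hxhi, hxR⟩ := ivt S p a k hap huniq S.card kc kb horder
      (hmb kc kb) (by rw [hbridgehi]; exact hlow) (by rw [hbridgelo]; exact hhigh)
    refine ⟨x, hxS, ?_, hxR, ?_, ?_, ?_⟩
    · rintro rfl
      rw [det3_pap] at hxpos
      linarith
    · rw [det3_swap23 p x a]
      linarith
    · have : det3 p b x < 0 := (det_pzy_neg_iff hap hb0 (ne_of_gt hxpos)).2
        (Or.inl ⟨hpab, hxpos, hxlo⟩)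
      rw [det3_swap23 p x b]
      linarith
    · have : det3 p c x < 0 := (det_pzy_neg_iff hap hc0 (ne_of_gt hxpos)).2
        (Or.inr (Or.inr (Or.inl ⟨hpac, hxpos, by rw [hkc] at hxhi; exact hxhi⟩)))
      rw [det3_swap23 p x c]
      linarith

end Corner


section Count

variable {S : Finset Pt} {a b c : Pt}

theorem corner_count (hgp : GenPos S) (hD : 0 < det3 a b c)
    (ha : a ∉ S) (hb : b ∉ S) (hc : c ∉ S)
    (l₁ l₂ l₃ : Pt → ℝ) (hl : ∀ x ∈ S, IsComb a b c x (l₁ x) (l₂ x) (l₃ x))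
    {k : ℕ} (hk1 : 1 ≤ k) (hkn : 2*k+3 ≤ S.card) :
    ((k:ℤ)+1) - ((S.filter (fun p => rhoP S c p ≤ k ∧ rhoM S b p ≤ k)).card : ℤ)
      ≤ (((S ×ˢ S).filter (fun e => e.1 ≠ e.2 ∧
          (S.filter (fun y => det3 e.1 e.2 y < 0)).card = k ∧
          det3 e.1 e.2 a < 0 ∧ 0 < det3 e.1 e.2 b ∧ 0 < det3 e.1 e.2 c)).card : ℤ) := by
  classical
  set G := S.filter (fun p => rhoP S c p ≤ k ∧ k+1 ≤ rhoM S b p) with hG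
  set Bad := S.filter (fun p => rhoP S c p ≤ k ∧ rhoM S b p ≤ k) with hBad
  set T := (S ×ˢ S).filter (fun e => e.1 ≠ e.2 ∧
      (S.filter (fun y => det3 e.1 e.2 y < 0)).card = k ∧
      det3 e.1 e.2 a < 0 ∧ 0 < det3 e.1 e.2 b ∧ 0 < det3 e.1 e.2 c) with hT
  -- the low set splits
  have hlowcard : k + 1 ≤ (S.filter (fun p => rhoP S c p ≤ k)).card :=
    rhoP_rank hgp hD hc l₁ l₂ l₃ hl k (by omega)
  have hsplit : S.filter (fun p => rhoP S c p ≤ k) ⊆ G ∪ Bad := by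
    intro p hp
    have h1 := (Finset.mem_filter.1 hp).1
    have h2 := (Finset.mem_filter.1 hp).2
    rcases le_or_gt (rhoM S b p) k with h | h
    · exact Finset.mem_union.2 (Or.inr (Finset.mem_filter.2 ⟨h1, h2, h⟩))
    · exact Finset.mem_union.2 (Or.inl (Finset.mem_filter.2 ⟨h1, h2, h⟩))
  have hGBad : k + 1 ≤ G.card + Bad.card := by
    have h1 := Finset.card_le_card hsplit
    have h2 := Finset.card_union_le G Bad
    omega
  -- choice of witnesses
  have hch : ∀ p : Pt, ∃ x : Pt, p ∈ G → (x ∈ S ∧ x ≠ p ∧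
      (S.filter (fun y => det3 p x y < 0)).card = k ∧
      det3 p x a < 0 ∧ 0 < det3 p x b ∧ 0 < det3 p x c) := by
    intro p
    by_cases hp : p ∈ G
    · have h1 := (Finset.mem_filter.1 hp).1
      have h2 := (Finset.mem_filter.1 hp).2
      obtain ⟨x, hx, hrest⟩ := corner_exists hgp hD ha hb hc l₁ l₂ l₃ hl hk1 hkn h1 h2.1 h2.2
      exact ⟨x, fun _ => ⟨hx, hrest⟩⟩
    · exact ⟨p, fun h => absurd h hp⟩
  choose w hw using hch
  have hmap : ∀ p ∈ G, (p, w p) ∈ T := by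
    intro p hp
    have hpS := (Finset.mem_filter.1 hp).1
    obtain ⟨hwS, hwp, hR, hA, hB, hC⟩ := hw p hp
    refine Finset.mem_filter.2 ⟨Finset.mem_product.2 ⟨hpS, hwS⟩, ?_, hR, hA, hB, hC⟩
    exact fun hcon => hwp hcon.symm
  have hinj : Set.InjOn (fun p => (p, w p)) G := by
    intro p _ q _ heq
    exact congrArg Prod.fst heq
  have hcT : G.card ≤ T.card := Finset.card_le_card_of_injOn _ hmap hinj
  have hk1' : (k:ℤ) + 1 ≤ (G.card : ℤ) + Bad.card := by exact_mod_cast hGBad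
  have : (G.card : ℤ) ≤ T.card := by exact_mod_cast hcT
  omega

end Count


lemma comb_rot {a b c x : Pt} {l₁ l₂ l₃ : ℝ} (h : IsComb a b c x l₁ l₂ l₃) :
    IsComb b c a x l₂ l₃ l₁ := by
  obtain ⟨h1, h2, h3, h4, h5, h6⟩ := h
  exact ⟨h2, h3, h1, by linarith, by rw [h5]; ring, by rw [h6]; ring⟩

section MainCorner

variable {S : Finset Pt} {a b c : Pt}

theorem main_corner (hgp : GenPos S) (hD : 0 < det3 a b c)
    (ha : a ∉ S) (hb : b ∉ S) (hc : c ∉ S)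
    (l₁ l₂ l₃ : Pt → ℝ) (hl : ∀ x ∈ S, IsComb a b c x (l₁ x) (l₂ x) (l₃ x))
    {k : ℕ} (hk1 : 1 ≤ k) (hkn : 2*k+3 ≤ S.card) :
    3*(k:ℤ) + 3 - (S.card : ℤ)
      ≤ (((S ×ˢ S).filter (fun pq : Pt × Pt => pq.1 ≠ pq.2 ∧
        (S.filter (fun x => det3 pq.1 pq.2 x < 0)).card = k ∧
        (({a, b, c} : Finset Pt).filter (fun t => det3 pq.1 pq.2 t < 0)).card = 1)).card : ℤ) := by
  classical
  set TGT := (S ×ˢ S).filter (fun pq : Pt × Pt => pq.1 ≠ pq.2 ∧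
        (S.filter (fun x => det3 pq.1 pq.2 x < 0)).card = k ∧
        (({a, b, c} : Finset Pt).filter (fun t => det3 pq.1 pq.2 t < 0)).card = 1) with hTGT
  set T₁ := (S ×ˢ S).filter (fun e => e.1 ≠ e.2 ∧
      (S.filter (fun y => det3 e.1 e.2 y < 0)).card = k ∧
      det3 e.1 e.2 a < 0 ∧ 0 < det3 e.1 e.2 b ∧ 0 < det3 e.1 e.2 c) with hT₁
  set T₂ := (S ×ˢ S).filter (fun e => e.1 ≠ e.2 ∧
      (S.filter (fun y => det3 e.1 e.2 y < 0)).card = k ∧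
      det3 e.1 e.2 b < 0 ∧ 0 < det3 e.1 e.2 c ∧ 0 < det3 e.1 e.2 a) with hT₂
  set T₃ := (S ×ˢ S).filter (fun e => e.1 ≠ e.2 ∧
      (S.filter (fun y => det3 e.1 e.2 y < 0)).card = k ∧
      det3 e.1 e.2 c < 0 ∧ 0 < det3 e.1 e.2 a ∧ 0 < det3 e.1 e.2 b) with hT₃
  set B₁ := S.filter (fun p => rhoP S c p ≤ k ∧ rhoM S b p ≤ k) with hB₁
  set B₂ := S.filter (fun p => rhoP S a p ≤ k ∧ rhoM S c p ≤ k) with hB₂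
  set B₃ := S.filter (fun p => rhoP S b p ≤ k ∧ rhoM S a p ≤ k) with hB₃
  have hD₂ : 0 < det3 b c a := by rw [← det3_cyc]; exact hD
  have hD₃ : 0 < det3 c a b := by rw [det3_cyc]; exact hD
  have hl₂ : ∀ x ∈ S, IsComb b c a x (l₂ x) (l₃ x) (l₁ x) := fun x hx => comb_rot (hl x hx)
  have hl₃ : ∀ x ∈ S, IsComb c a b x (l₃ x) (l₁ x) (l₂ x) := fun x hx => comb_rot (hl₂ x hx)
  have hcnt₁ := corner_count hgp hD ha hb hc l₁ l₂ l₃ hl hk1 hkn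
  have hcnt₂ := corner_count hgp hD₂ hb hc ha (fun x => l₂ x) (fun x => l₃ x) (fun x => l₁ x)
    hl₂ hk1 hkn
  have hcnt₃ := corner_count hgp hD₃ hc ha hb (fun x => l₃ x) (fun x => l₁ x) (fun x => l₂ x)
    hl₃ hk1 hkn
  -- Bad sets are pairwise disjoint
  have hd12 : Disjoint B₁ B₂ := by
    rw [Finset.disjoint_left]
    intro p hp1 hp2
    have h1 := (Finset.mem_filter.1 hp1).2
    have h2 := (Finset.mem_filter.1 hp2).2
    have := rho_sum hgp hc (Finset.mem_filter.1 hp1).1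
    omega
  have hd13 : Disjoint B₁ B₃ := by
    rw [Finset.disjoint_left]
    intro p hp1 hp3
    have h1 := (Finset.mem_filter.1 hp1).2
    have h3 := (Finset.mem_filter.1 hp3).2
    have := rho_sum hgp hb (Finset.mem_filter.1 hp1).1
    omega
  have hd23 : Disjoint B₂ B₃ := by
    rw [Finset.disjoint_left]
    intro p hp2 hp3
    have h2 := (Finset.mem_filter.1 hp2).2
    have h3 := (Finset.mem_filter.1 hp3).2
    have := rho_sum hgp ha (Finset.mem_filter.1 hp2).1
    omega
  have hBsum : B₁.card + B₂.card + B₃.card ≤ S.card := by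
    have hu : (B₁ ∪ B₂ ∪ B₃) ⊆ S := by
      intro p hp
      rcases Finset.mem_union.1 hp with h | h
      · rcases Finset.mem_union.1 h with h | h
        · exact (Finset.mem_filter.1 h).1
        · exact (Finset.mem_filter.1 h).1
      · exact (Finset.mem_filter.1 h).1
    have e1 : (B₁ ∪ B₂).card = B₁.card + B₂.card := Finset.card_union_of_disjoint hd12
    have e2 : ((B₁ ∪ B₂) ∪ B₃).card = (B₁ ∪ B₂).card + B₃.card :=
      Finset.card_union_of_disjoint (by
        rw [Finset.disjoint_union_left]
        exact ⟨hd13, hd23⟩)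
    have := Finset.card_le_card hu
    omega
  -- T's are pairwise disjoint subsets of TGT
  have hsub₁ : T₁ ⊆ TGT := by
    intro e he
    have h1 := (Finset.mem_filter.1 he).1
    obtain ⟨hne, hR, hA, hB, hC⟩ := (Finset.mem_filter.1 he).2
    refine Finset.mem_filter.2 ⟨h1, hne, hR, ?_⟩
    rw [show ({a, b, c} : Finset Pt) = insert a (insert b {c}) from rfl]
    rw [Finset.filter_insert, if_pos hA, Finset.filter_insert, if_neg (by exact not_lt.2 (le_of_lt hB)),
      Finset.filter_singleton, if_neg (by exact not_lt.2 (le_of_lt hC))]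
    simp
  have hsub₂ : T₂ ⊆ TGT := by
    intro e he
    have h1 := (Finset.mem_filter.1 he).1
    obtain ⟨hne, hR, hB, hC, hA⟩ := (Finset.mem_filter.1 he).2
    refine Finset.mem_filter.2 ⟨h1, hne, hR, ?_⟩
    rw [show ({a, b, c} : Finset Pt) = insert a (insert b {c}) from rfl]
    rw [Finset.filter_insert, if_neg (by exact not_lt.2 (le_of_lt hA)), Finset.filter_insert,
      if_pos hB, Finset.filter_singleton, if_neg (by exact not_lt.2 (le_of_lt hC))]
    simp
  have hsub₃ : T₃ ⊆ TGT := by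
    intro e he
    have h1 := (Finset.mem_filter.1 he).1
    obtain ⟨hne, hR, hC, hA, hB⟩ := (Finset.mem_filter.1 he).2
    refine Finset.mem_filter.2 ⟨h1, hne, hR, ?_⟩
    rw [show ({a, b, c} : Finset Pt) = insert a (insert b {c}) from rfl]
    rw [Finset.filter_insert, if_neg (by exact not_lt.2 (le_of_lt hA)), Finset.filter_insert,
      if_neg (by exact not_lt.2 (le_of_lt hB)), Finset.filter_singleton, if_pos hC]
    simp
  have htd12 : Disjoint T₁ T₂ := by
    rw [Finset.disjoint_left]
    intro e he1 he2
    have h1 := (Finset.mem_filter.1 he1).2.2.2.1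
    have h2 := (Finset.mem_filter.1 he2).2.2.2.2.2
    linarith
  have htd13 : Disjoint T₁ T₃ := by
    rw [Finset.disjoint_left]
    intro e he1 he3
    have h1 := (Finset.mem_filter.1 he1).2.2.2.1
    have h3 := (Finset.mem_filter.1 he3).2.2.2.2.1
    linarith
  have htd23 : Disjoint T₂ T₃ := by
    rw [Finset.disjoint_left]
    intro e he2 he3
    have h2 := (Finset.mem_filter.1 he2).2.2.2.1
    have h3 := (Finset.mem_filter.1 he3).2.2.2.2.2
    linarith
  have hTsum : T₁.card + T₂.card + T₃.card ≤ TGT.card := by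
    have hu : (T₁ ∪ T₂ ∪ T₃) ⊆ TGT := by
      intro e he
      rcases Finset.mem_union.1 he with h | h
      · rcases Finset.mem_union.1 h with h | h
        · exact hsub₁ h
        · exact hsub₂ h
      · exact hsub₃ h
    have e1 : (T₁ ∪ T₂).card = T₁.card + T₂.card := Finset.card_union_of_disjoint htd12
    have e2 : ((T₁ ∪ T₂) ∪ T₃).card = (T₁ ∪ T₂).card + T₃.card :=
      Finset.card_union_of_disjoint (by
        rw [Finset.disjoint_union_left]
        exact ⟨htd13, htd23⟩)
    have := Finset.card_le_card hu
    omega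
  -- put everything together over ℤ
  have c1 : ((k:ℤ)+1) - (B₁.card : ℤ) ≤ (T₁.card : ℤ) := hcnt₁
  have c2 : ((k:ℤ)+1) - (B₂.card : ℤ) ≤ (T₂.card : ℤ) := hcnt₂
  have c3 : ((k:ℤ)+1) - (B₃.card : ℤ) ≤ (T₃.card : ℤ) := hcnt₃
  have hB' : (B₁.card : ℤ) + B₂.card + B₃.card ≤ (S.card : ℤ) := by exact_mod_cast hBsum
  have hT' : (T₁.card : ℤ) + T₂.card + T₃.card ≤ (TGT.card : ℤ) := by exact_mod_cast hTsum
  omega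

end MainCorner


section Halving

variable {S : Finset Pt}

lemma split_counts {p q : Pt} (hp : p ∈ S)
    (hq0 : ∀ y ∈ S, y ≠ p → det3 p q y ≠ 0) :
    (S.filter (fun y => det3 p q y < 0)).card
      + (S.filter (fun y => 0 < det3 p q y)).card + 1 = S.card := by
  classical
  set A := S.filter (fun y => det3 p q y < 0) with hA
  set B := S.filter (fun y => 0 < det3 p q y) with hB
  have hu : A ∪ B = S.erase p := by
    ext y
    simp only [Finset.mem_union, Finset.mem_erase, hA, hB, Finset.mem_filter]
    constructor
    · rintro (⟨hy, h⟩ | ⟨hy, h⟩)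
      · refine ⟨?_, hy⟩
        rintro rfl
        rw [det3_pap] at h
        linarith
      · refine ⟨?_, hy⟩
        rintro rfl
        rw [det3_pap] at h
        linarith
    · rintro ⟨hyp, hy⟩
      have := hq0 y hy hyp
      rcases this.lt_or_gt with h | h
      · exact Or.inl ⟨hy, h⟩
      · exact Or.inr ⟨hy, h⟩
  have hd : Disjoint A B := by
    rw [Finset.disjoint_left]
    intro y hy1 hy2
    have h1 := (Finset.mem_filter.1 hy1).2
    have h2 := (Finset.mem_filter.1 hy2).2
    linarith
  have h1 : A.card + B.card = (S.erase p).card := by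
    rw [← Finset.card_union_of_disjoint hd, hu]
  have h2 : (S.erase p).card = S.card - 1 := Finset.card_erase_of_mem hp
  have h3 : 1 ≤ S.card := Finset.card_pos.2 ⟨p, hp⟩
  omega

lemma halving_aux (hgp : GenPos S) {p q : Pt} (hp : p ∈ S) (hq : q ≠ p)
    (hq0 : ∀ y ∈ S, y ≠ p → det3 p q y ≠ 0) {k : ℕ} (hn : S.card = 2*k+2)
    (hs : (S.filter (fun y => det3 p q y < 0)).card ≤ k) :
    ∃ x ∈ S, x ≠ p ∧ (S.filter (fun y => det3 p x y < 0)).card = k := by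
  classical
  have huniq : ∀ y ∈ S, ∀ z ∈ S, det3 p q y ≠ 0 → det3 p q z ≠ 0 → y ≠ z →
      kap p q y ≠ kap p q z := by
    intro y hy z hz hy0 hz0 hyz hcon
    have h0 : det3 p y z = 0 := (det_pzy_eq_zero_iff hq hy0 hz0).2 hcon
    have hyp : y ≠ p := by rintro rfl; rw [det3_pap] at hy0; exact hy0 rfl
    have hzp : z ≠ p := by rintro rfl; rw [det3_pap] at hz0; exact hz0 rfl
    exact hgp p hp y hy z hz (Ne.symm hyp) (Ne.symm hzp) hyz h0
  set M := insert (0:ℝ) ((S.filter (fun y => det3 p q y ≠ 0)).image (kap p q)) with hM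
  have hMne : M.Nonempty := Finset.insert_nonempty _ _
  set c₁ := M.max' hMne + 1 with hc₁
  set c₂ := M.min' hMne - 1 with hc₂
  have hcc : c₂ < c₁ := by
    have := Finset.min'_le M 0 (Finset.mem_insert_self _ _)
    have := Finset.le_max' M 0 (Finset.mem_insert_self _ _)
    simp only [hc₁, hc₂]
    linarith
  have hhi : ∀ y ∈ S, det3 p q y ≠ 0 → kap p q y < c₁ := by
    intro y hy hy0
    have : kap p q y ∈ M := Finset.mem_insert.2 (Or.inr
      (Finset.mem_image.2 ⟨y, Finset.mem_filter.2 ⟨hy, hy0⟩, rfl⟩))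
    have := Finset.le_max' M _ this
    simp only [hc₁]
    linarith
  have hlo : ∀ y ∈ S, det3 p q y ≠ 0 → c₂ < kap p q y := by
    intro y hy hy0
    have : kap p q y ∈ M := Finset.mem_insert.2 (Or.inr
      (Finset.mem_image.2 ⟨y, Finset.mem_filter.2 ⟨hy, hy0⟩, rfl⟩))
    have := Finset.min'_le M _ this
    simp only [hc₂]
    linarith
  have hf : fcnt S p q c₁ = (S.filter (fun y => det3 p q y < 0)).card := by
    unfold fcnt
    congr 1
    apply Finset.filter_congr
    intro y hy
    constructor
    · rintro (⟨h1, h2⟩ | ⟨h1, _⟩ | ⟨h1, h2, _⟩)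
      · exact absurd h2 (not_le.2 (hhi y hy (ne_of_gt h1)))
      · exact h1
      · exact absurd h1 (hq0 y hy h2)
    · intro h
      exact Or.inr (Or.inl ⟨h, hhi y hy (ne_of_lt h)⟩)
  have hpre : precnt S p q c₂ = (S.filter (fun y => 0 < det3 p q y)).card := by
    unfold precnt
    congr 1
    apply Finset.filter_congr
    intro y hy
    constructor
    · rintro (⟨h1, _⟩ | ⟨h1, h2⟩ | ⟨h1, h2, _⟩)
      · exact h1
      · exact absurd h2 (not_le.2 (hlo y hy (ne_of_lt h1)))
      · exact absurd h1 (hq0 y hy h2)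
    · intro h
      exact Or.inl ⟨h, hlo y hy (ne_of_gt h)⟩
  have hsplit := split_counts hp hq0
  obtain ⟨x, hxS, hxpos, _, _, hxR⟩ := ivt S p q k hq huniq S.card c₁ c₂ hcc
    (Finset.card_le_card (Finset.filter_subset _ _))
    (by rw [hf]; exact hs)
    (by rw [hpre]; omega)
  refine ⟨x, hxS, ?_, hxR⟩
  rintro rfl
  rw [det3_pap] at hxpos
  linarith

theorem halving_exists (hgp : GenPos S) {k : ℕ} (hn : S.card = 2*k+2) {p : Pt} (hp : p ∈ S) :
    ∃ x ∈ S, x ≠ p ∧ (S.filter (fun y => det3 p x y < 0)).card = k := by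
  classical
  -- choose a generic slope
  obtain ⟨M, hM⟩ := Infinite.exists_notMem_finset
    ((S.erase p).image (fun y => (y.2 - p.2) / (y.1 - p.1)))
  set q : Pt := (p.1 + 1, p.2 + M) with hq
  have hqp : q ≠ p := by
    intro h
    have := congrArg Prod.fst h
    simp only [hq] at this
    linarith
  have hq0 : ∀ y ∈ S, y ≠ p → det3 p q y ≠ 0 := by
    intro y hy hyp h0
    have h0' : (y.2 - p.2) - M * (y.1 - p.1) = 0 := by
      simp only [det3, hq] at h0
      linarith [h0]
    by_cases h1 : y.1 - p.1 = 0
    · have h2 : y.2 - p.2 = 0 := by rw [h1] at h0'; linarith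
      exact hyp (Prod.ext (by linarith) (by linarith))
    · apply hM
      refine Finset.mem_image.2 ⟨y, Finset.mem_erase.2 ⟨hyp, hy⟩, ?_⟩
      field_simp
      linarith [h0']
  set q' : Pt := (p.1 - 1, p.2 - M) with hq'
  have hq'p : q' ≠ p := by
    intro h
    have := congrArg Prod.fst h
    simp only [hq'] at this
    linarith
  have hflip : ∀ y : Pt, det3 p q' y = -det3 p q y := by
    intro y
    simp only [det3, hq, hq']
    ring
  have hq'0 : ∀ y ∈ S, y ≠ p → det3 p q' y ≠ 0 := by
    intro y hy hyp h0
    rw [hflip] at h0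
    exact hq0 y hy hyp (by linarith)
  rcases le_or_gt ((S.filter (fun y => det3 p q y < 0)).card) k with hs | hs
  · exact halving_aux hgp hp hqp hq0 hn hs
  · apply halving_aux hgp hp hq'p hq'0 hn
    have he : S.filter (fun y => det3 p q' y < 0) = S.filter (fun y => 0 < det3 p q y) := by
      apply Finset.filter_congr
      intro y _
      rw [hflip]
      constructor <;> intro h <;> linarith
    rw [he]
    have := split_counts hp hq0
    omega

end Halving


section Orient

variable {S : Finset Pt} {a b c : Pt}

lemma comb_affine {w : Pt} {l₁ l₂ l₃ : ℝ} (h : IsComb a b c w l₁ l₂ l₃) (u v : Pt) :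
    det3 u v w = l₁ * det3 u v a + l₂ * det3 u v b + l₃ * det3 u v c := by
  obtain ⟨_, _, _, h4, h5, h6⟩ := h
  simp only [det3]
  rw [h5, h6]
  linear_combination ((v.1 - u.1) * u.2 - (v.2 - u.2) * u.1) * h4

lemma negl (ha : a ∉ S) (hb : b ∉ S) (hc : c ∉ S)
    {w : Pt} (hw : w ∈ S) {l₁ l₂ l₃ : ℝ} (hlw : IsComb a b c w l₁ l₂ l₃)
    {u v : Pt} (h0 : det3 u v w = 0)
    (hA : det3 u v a ≤ 0) (hB : det3 u v b ≤ 0) (hC : det3 u v c ≤ 0)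
    (hst : (det3 u v a < 0 ∧ det3 u v b < 0) ∨ (det3 u v a < 0 ∧ det3 u v c < 0) ∨
      (det3 u v b < 0 ∧ det3 u v c < 0)) : False := by
  have haff := comb_affine hlw u v
  rw [h0] at haff
  have hl1 := hlw.1
  have hl2 := hlw.2.1
  have hl3 := hlw.2.2.1
  have hsum := hlw.2.2.2.1
  have e5 := hlw.2.2.2.2.1
  have e6 := hlw.2.2.2.2.2
  have t1 : l₁ * det3 u v a ≤ 0 := by nlinarith
  have t2 : l₂ * det3 u v b ≤ 0 := by nlinarith
  have t3 : l₃ * det3 u v c ≤ 0 := by nlinarith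
  have z1 : l₁ * det3 u v a = 0 := by linarith
  have z2 : l₂ * det3 u v b = 0 := by linarith
  have z3 : l₃ * det3 u v c = 0 := by linarith
  rcases hst with ⟨s1, s2⟩ | ⟨s1, s2⟩ | ⟨s1, s2⟩
  · have hl10 : l₁ = 0 := by
      rcases mul_eq_zero.1 z1 with h | h
      · exact h
      · linarith
    have hl20 : l₂ = 0 := by
      rcases mul_eq_zero.1 z2 with h | h
      · exact h
      · linarith
    apply hc
    have hl31 : l₃ = 1 := by linarith
    have : w = c := Prod.ext (by rw [e5, hl10, hl20, hl31]; ring) (by rw [e6, hl10, hl20, hl31]; ring)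
    rwa [← this]
  · have hl10 : l₁ = 0 := by
      rcases mul_eq_zero.1 z1 with h | h
      · exact h
      · linarith
    have hl30 : l₃ = 0 := by
      rcases mul_eq_zero.1 z3 with h | h
      · exact h
      · linarith
    apply hb
    have hl21 : l₂ = 1 := by linarith
    have : w = b := Prod.ext (by rw [e5, hl10, hl30, hl21]; ring) (by rw [e6, hl10, hl30, hl21]; ring)
    rwa [← this]
  · have hl20 : l₂ = 0 := by
      rcases mul_eq_zero.1 z2 with h | h
      · exact h
      · linarith
    have hl30 : l₃ = 0 := by
      rcases mul_eq_zero.1 z3 with h | h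
      · exact h
      · linarith
    apply ha
    have hl11 : l₁ = 1 := by linarith
    have : w = a := Prod.ext (by rw [e5, hl20, hl30, hl11]; ring) (by rw [e6, hl20, hl30, hl11]; ring)
    rwa [← this]

lemma cf3 (hab : a ≠ b) (hac : a ≠ c) (hbc : b ≠ c) (P : Pt → Prop) :
    (({a, b, c} : Finset Pt).filter P).card =
      (if P a then 1 else 0) + (if P b then 1 else 0) + (if P c then 1 else 0) := by
  classical
  rw [show ({a, b, c} : Finset Pt) = insert a (insert b {c}) from rfl]
  rw [Finset.filter_insert, Finset.filter_insert, Finset.filter_singleton]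
  split_ifs with h1 h2 h3 <;>
    simp [Finset.card_insert_of_notMem, Finset.mem_insert, Finset.mem_singleton, hab, hac, hbc]

lemma orient_exists (hgp : GenPos S) (hD : 0 < det3 a b c)
    (ha : a ∉ S) (hb : b ∉ S) (hc : c ∉ S)
    (l₁ l₂ l₃ : Pt → ℝ) (hl : ∀ x ∈ S, IsComb a b c x (l₁ x) (l₂ x) (l₃ x))
    {p x : Pt} (hp : p ∈ S) (hx : x ∈ S) (hpx : p ≠ x) :
    ∃ e : Pt × Pt, (e = (p, x) ∨ e = (x, p)) ∧
      (({a, b, c} : Finset Pt).filter (fun t => det3 e.1 e.2 t < 0)).card = 1 := by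
  classical
  have hab : a ≠ b := by
    intro h
    rw [h] at hD
    rw [show det3 b b c = 0 from by simp only [det3]; ring] at hD
    linarith
  have hac : a ≠ c := by
    intro h
    rw [h] at hD
    rw [show det3 c b c = 0 from by simp only [det3]; ring] at hD
    linarith
  have hbc : b ≠ c := by
    intro h
    rw [h] at hD
    rw [show det3 a c c = 0 from by simp only [det3]; ring] at hD
    linarith
  have hA' : det3 x p a = -det3 p x a := by rw [det3_swap12 x p a]
  have hB' : det3 x p b = -det3 p x b := by rw [det3_swap12 x p b]
  have hC' : det3 x p c = -det3 p x c := by rw [det3_swap12 x p c]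
  have h0px : det3 p x p = 0 := det3_pap p x
  have h0xp : det3 x p p = 0 := by
    rw [det3_swap12 x p p, det3_pap p x]
    ring
  have hlw := hl p hp
  have hcol : ¬(det3 p x a = 0 ∧ det3 p x b = 0 ∧ det3 p x c = 0) := by
    rintro ⟨h1, h2, h3⟩
    have hap : a ≠ p := by rintro rfl; exact ha hp
    have hbp : b ≠ p := by rintro rfl; exact hb hp
    have hcp : c ≠ p := by rintro rfl; exact hc hp
    have := collinear3 (Ne.symm hpx) h1 h2 h3 hap hbp hcp
    linarith
  rcases lt_trichotomy (det3 p x a) 0 with sA | sA | sA <;>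
    rcases lt_trichotomy (det3 p x b) 0 with sB | sB | sB <;>
      rcases lt_trichotomy (det3 p x c) 0 with sC | sC | sC <;>
  first
    | (exact absurd ⟨by linarith, by linarith, by linarith⟩ hcol)
    | (exact absurd (negl ha hb hc hp hlw h0px (by linarith) (by linarith) (by linarith)
        (by first
          | exact Or.inl ⟨by linarith, by linarith⟩
          | exact Or.inr (Or.inl ⟨by linarith, by linarith⟩)
          | exact Or.inr (Or.inr ⟨by linarith, by linarith⟩))) (by simp))
    | (exact absurd (negl ha hb hc hp hlw h0xp (by rw [hA']; linarith) (by rw [hB']; linarith)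
        (by rw [hC']; linarith)
        (by first
          | exact Or.inl ⟨by rw [hA']; linarith, by rw [hB']; linarith⟩
          | exact Or.inr (Or.inl ⟨by rw [hA']; linarith, by rw [hC']; linarith⟩)
          | exact Or.inr (Or.inr ⟨by rw [hB']; linarith, by rw [hC']; linarith⟩))) (by simp))
    | (refine ⟨(p, x), Or.inl rfl, ?_⟩
       rw [cf3 hab hac hbc]
       split_ifs <;> first | rfl | omega | linarith)
    | (refine ⟨(x, p), Or.inr rfl, ?_⟩
       rw [cf3 hab hac hbc]
       simp only [hA', hB', hC']
       split_ifs <;> first | rfl | omega | linarith)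

end Orient


section MainHalving

variable {S : Finset Pt} {a b c : Pt}

lemma rev_count (hgp : GenPos S) {k : ℕ} (hn : S.card = 2*k+2) {p x : Pt}
    (hp : p ∈ S) (hx : x ∈ S) (hpx : p ≠ x)
    (hR : (S.filter (fun y => det3 p x y < 0)).card = k) :
    (S.filter (fun y => det3 x p y < 0)).card = k := by
  classical
  have he : S.filter (fun y => det3 x p y < 0) = S.filter (fun y => 0 < det3 p x y) := by
    apply Finset.filter_congr
    intro y _
    rw [det3_swap12 x p y]
    constructor <;> intro h <;> linarith
  rw [he]
  set A := S.filter (fun y => det3 p x y < 0) with hA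
  set B := S.filter (fun y => 0 < det3 p x y) with hB
  set C := S.filter (fun y => det3 p x y = 0) with hC
  have hCpx : C = {p, x} := by
    ext y
    simp only [hC, Finset.mem_filter, Finset.mem_insert, Finset.mem_singleton]
    constructor
    · rintro ⟨hy, h0⟩
      by_contra hcon
      push_neg at hcon
      exact hgp p hp x hx y hy hpx (Ne.symm hcon.1) (Ne.symm hcon.2) h0
    · rintro (h | h)
      · rw [h]; exact ⟨hp, det3_pap p x⟩
      · rw [h]; exact ⟨hx, det3_pxx p x⟩
  have hCcard : C.card = 2 := by rw [hCpx]; exact Finset.card_pair hpx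
  have hcover : S ⊆ A ∪ B ∪ C := by
    intro y hy
    rcases lt_trichotomy (det3 p x y) 0 with h | h | h
    · exact Finset.mem_union.2 (Or.inl (Finset.mem_union.2 (Or.inl (Finset.mem_filter.2 ⟨hy, h⟩))))
    · exact Finset.mem_union.2 (Or.inr (Finset.mem_filter.2 ⟨hy, h⟩))
    · exact Finset.mem_union.2 (Or.inl (Finset.mem_union.2 (Or.inr (Finset.mem_filter.2 ⟨hy, h⟩))))
  have hdAB : Disjoint A B := by
    rw [Finset.disjoint_left]
    intro y h1 h2
    have := (Finset.mem_filter.1 h1).2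
    have := (Finset.mem_filter.1 h2).2
    linarith
  have hdABC : Disjoint (A ∪ B) C := by
    rw [Finset.disjoint_left]
    intro y h1 h2
    have h2' := (Finset.mem_filter.1 h2).2
    rcases Finset.mem_union.1 h1 with h | h
    · have := (Finset.mem_filter.1 h).2; linarith
    · have := (Finset.mem_filter.1 h).2; linarith
  have e1 : (A ∪ B).card = A.card + B.card := Finset.card_union_of_disjoint hdAB
  have e2 : ((A ∪ B) ∪ C).card = (A ∪ B).card + C.card := Finset.card_union_of_disjoint hdABC
  have e3 : S.card ≤ ((A ∪ B) ∪ C).card := Finset.card_le_card hcover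
  have e4 : ((A ∪ B) ∪ C).card ≤ S.card := by
    apply Finset.card_le_card
    intro y hy
    rcases Finset.mem_union.1 hy with h | h
    · rcases Finset.mem_union.1 h with h | h
      · exact (Finset.mem_filter.1 h).1
      · exact (Finset.mem_filter.1 h).1
    · exact (Finset.mem_filter.1 h).1
  omega

theorem main_halving (hgp : GenPos S) (hD : 0 < det3 a b c)
    (ha : a ∉ S) (hb : b ∉ S) (hc : c ∉ S)
    (l₁ l₂ l₃ : Pt → ℝ) (hl : ∀ x ∈ S, IsComb a b c x (l₁ x) (l₂ x) (l₃ x))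
    {k : ℕ} (hn : S.card = 2*k+2) :
    k + 1 ≤ ((S ×ˢ S).filter (fun pq : Pt × Pt => pq.1 ≠ pq.2 ∧
        (S.filter (fun x => det3 pq.1 pq.2 x < 0)).card = k ∧
        (({a, b, c} : Finset Pt).filter (fun t => det3 pq.1 pq.2 t < 0)).card = 1)).card := by
  classical
  set TGT := (S ×ˢ S).filter (fun pq : Pt × Pt => pq.1 ≠ pq.2 ∧
        (S.filter (fun x => det3 pq.1 pq.2 x < 0)).card = k ∧
        (({a, b, c} : Finset Pt).filter (fun t => det3 pq.1 pq.2 t < 0)).card = 1) with hTGT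
  have hch : ∀ p : Pt, ∃ e : Pt × Pt, p ∈ S → (e ∈ TGT ∧ (e.1 = p ∨ e.2 = p)) := by
    intro p
    by_cases hp : p ∈ S
    · obtain ⟨x, hxS, hxp, hRpx⟩ := halving_exists hgp hn hp
      have hRxp := rev_count hgp hn hp hxS (Ne.symm hxp) hRpx
      obtain ⟨e, hor, hcard⟩ := orient_exists hgp hD ha hb hc l₁ l₂ l₃ hl hp hxS (Ne.symm hxp)
      refine ⟨e, fun _ => ⟨?_, ?_⟩⟩
      · rcases hor with rfl | rfl
        · exact Finset.mem_filter.2 ⟨Finset.mem_product.2 ⟨hp, hxS⟩,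
            fun hcon => hxp hcon.symm, hRpx, hcard⟩
        · exact Finset.mem_filter.2 ⟨Finset.mem_product.2 ⟨hxS, hp⟩, hxp, hRxp, hcard⟩
      · rcases hor with rfl | rfl
        · exact Or.inl rfl
        · exact Or.inr rfl
    · exact ⟨(p, p), fun h => absurd h hp⟩
  choose φ hφ using hch
  have himg : S.image φ ⊆ TGT := by
    intro e he
    rcases Finset.mem_image.1 he with ⟨p, hp, rfl⟩
    exact (hφ p hp).1
  have hfib : ∀ e ∈ S.image φ, (S.filter (fun p => φ p = e)).card ≤ 2 := by
    intro e _
    have hsub : S.filter (fun p => φ p = e) ⊆ {e.1, e.2} := by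
      intro p hp
      have h1 := (Finset.mem_filter.1 hp).1
      have h2 := (Finset.mem_filter.1 hp).2
      have := (hφ p h1).2
      rw [h2] at this
      rcases this with h | h
      · exact Finset.mem_insert.2 (Or.inl h.symm)
      · exact Finset.mem_insert.2 (Or.inr (Finset.mem_singleton.2 h.symm))
    have := Finset.card_le_card hsub
    have h2 : ({e.1, e.2} : Finset Pt).card ≤ 2 := Finset.card_insert_le _ _ |>.trans (by simp)
    omega
  have hcount : S.card ≤ 2 * (S.image φ).card := by
    rw [Finset.card_eq_sum_card_image φ S]
    calc ∑ e ∈ S.image φ, (S.filter (fun p => φ p = e)).card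
        ≤ ∑ _e ∈ S.image φ, 2 := Finset.sum_le_sum hfib
      _ = 2 * (S.image φ).card := by rw [Finset.sum_const, smul_eq_mul, mul_comm]
  have himgcard : (S.image φ).card ≤ TGT.card := Finset.card_le_card himg
  omega

end MainHalving


theorem main_all (S : Finset Pt) (hgp : GenPos S) (a b c : Pt) (hD : 0 < det3 a b c)
    (ha : a ∉ S) (hb : b ∉ S) (hc : c ∉ S)
    (hsub : (↑S : Set Pt) ⊆ convexHull ℝ ({a, b, c} : Set Pt))
    (k n : ℕ) (hn : S.card = n) (hk₁ : n / 3 ≤ k) (hk₂ : 2 * k + 2 ≤ n) :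
    3 * (k : ℤ) - n + 3
      ≤ (((S ×ˢ S).filter (fun pq : Pt × Pt => pq.1 ≠ pq.2 ∧
        (S.filter (fun x => det3 pq.1 pq.2 x < 0)).card = k ∧
        (({a, b, c} : Finset Pt).filter (fun t => det3 pq.1 pq.2 t < 0)).card = 1)).card : ℤ) := by
  classical
  have hcomb : ∀ x : Pt, ∃ l₁ l₂ l₃ : ℝ, x ∈ S → IsComb a b c x l₁ l₂ l₃ := by
    intro x
    by_cases hx : x ∈ S
    · obtain ⟨l₁, l₂, l₃, h⟩ := exists_coeffs (hsub hx)
      exact ⟨l₁, l₂, l₃, fun _ => h⟩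
    · exact ⟨0, 0, 0, fun h => absurd h hx⟩
  choose L₁ L₂ L₃ hL using hcomb
  have hl : ∀ x ∈ S, IsComb a b c x (L₁ x) (L₂ x) (L₃ x) := fun x hx => hL x hx
  rcases eq_or_lt_of_le hk₂ with heq | hlt
  · -- n = 2k+2 : halving case
    have hcard : S.card = 2*k+2 := by omega
    have h0 := main_halving hgp hD ha hb hc L₁ L₂ L₃ hl hcard
    have h' : (k : ℤ) + 1 ≤ (((S ×ˢ S).filter (fun pq : Pt × Pt => pq.1 ≠ pq.2 ∧
        (S.filter (fun x => det3 pq.1 pq.2 x < 0)).card = k ∧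
        (({a, b, c} : Finset Pt).filter (fun t => det3 pq.1 pq.2 t < 0)).card = 1)).card : ℤ) := by
      exact_mod_cast h0
    omega
  · -- n ≥ 2k+3 : corner case
    have hk1 : 1 ≤ k := by omega
    have hkn : 2*k+3 ≤ S.card := by omega
    have := main_corner hgp hD ha hb hc L₁ L₂ L₃ hl hk1 hkn
    rw [hn] at this
    omega


end St11

/-- if `S` (of size `n`, in general position) is contained in a
triangle `T` with vertices `t₁ t₂ t₃` and `⌊n/3⌋ ≤ k ≤ n/2 - 1`, then there are
at least `3k - n + 3` oriented `k`-edges of `S` having exactly one vertex of `T`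
strictly to their right. -/
theorem statement11 (S : Finset Pt) (n : ℕ) (hcard : S.card = n) (hgp : GenPos S)
    (t₁ t₂ t₃ : Pt) (htri : det3 t₁ t₂ t₃ ≠ 0)
    (ht₁ : t₁ ∉ S) (ht₂ : t₂ ∉ S) (ht₃ : t₃ ∉ S)
    (hsub : (↑S : Set Pt) ⊆ convexHull ℝ ({t₁, t₂, t₃} : Set Pt))
    (k : ℕ) (hk₁ : n / 3 ≤ k) (hk₂ : 2 * k + 2 ≤ n) :
    3 * (k : ℤ) - n + 3 ≤
      (((S ×ˢ S).filter (fun pq : Pt × Pt => pq.1 ≠ pq.2 ∧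
        (S.filter (fun x => det3 pq.1 pq.2 x < 0)).card = k ∧
        (({t₁, t₂, t₃} : Finset Pt).filter (fun t => det3 pq.1 pq.2 t < 0)).card = 1)).card : ℤ) := by
  rcases lt_or_gt_of_ne htri with hneg | hpos
  · -- negative orientation : swap t₂ and t₃
    have hD : 0 < det3 t₁ t₃ t₂ := by
      rw [St11.det3_swap23 t₁ t₃ t₂]
      linarith
    have hFeq : ({t₁, t₂, t₃} : Finset Pt) = {t₁, t₃, t₂} := by
      rw [Finset.pair_comm t₂ t₃]
    have hSeq : ({t₁, t₂, t₃} : Set Pt) = {t₁, t₃, t₂} := by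
      rw [Set.pair_comm t₂ t₃]
    rw [hSeq] at hsub
    have := St11.main_all S hgp t₁ t₃ t₂ hD ht₁ ht₃ ht₂ hsub k n hcard hk₁ hk₂
    rw [hFeq]
    exact this
  · exact St11.main_all S hgp t₁ t₂ t₃ hpos ht₁ ht₂ ht₃ hsub k n hcard hk₁ hk₂
end

section
/- The integral ∫_{t₀}^{1/2} (1 - 2t)·(1/3 + t - 3t² - √(1 - 4t²)) dt with t₀ = 0.4981 is positive; consequently ε = 24·∫_{t₀}^{1/2} (1-2t)(1/3 + t - 3t² - √(1-4t²)) dt > 10⁻⁶. -/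
/-!
On `[t₀, 1/2]` the factor `1/3 + t - 3t² - √(1 - 4t²)` is tiny, so the integrand has to be bounded
below sharply. The AM–GM bound `√y ≤ (c + y / c) / 2` turns it into a cubic polynomial, whose integral
is computed exactly; with `c = 0.0712` this already gives `ε > 1.27 · 10⁻⁶`.
-/

open Real Set intervalIntegral

theorem Real.sqrt_le_half_add_div {c y : ℝ} (hc : 0 < c) (hy : 0 ≤ y) :
    √y ≤ (c + y / c) / 2 := by
  rw [sqrt_le_left (by positivity)]
  have h : ((c + y / c) / 2) ^ 2 = y + ((c - y / c) / 2) ^ 2 := by field_simp; ring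
  nlinarith [sq_nonneg ((c - y / c) / 2)]

noncomputable def integrand (t : ℝ) : ℝ :=
  (1 - 2 * t) * (1 / 3 + t - 3 * t ^ 2 - √(1 - 4 * t ^ 2))

noncomputable def integrandMinorant (c t : ℝ) : ℝ :=
  (1 - 2 * t) * (1 / 3 + t - 3 * t ^ 2 - (c + (1 - 4 * t ^ 2) / c) / 2)

theorem continuous_integrand : Continuous integrand := by
  unfold integrand; fun_prop

theorem continuous_integrandMinorant (c : ℝ) : Continuous (integrandMinorant c) := by
  unfold integrandMinorant; fun_prop

theorem integrandMinorant_le_integrand {c t : ℝ} (hc : 0 < c) (ht : t ∈ Icc (-1 / 2 : ℝ) (1 / 2)) :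
    integrandMinorant c t ≤ integrand t := by
  obtain ⟨ht₁, ht₂⟩ := ht
  have hsqrt := Real.sqrt_le_half_add_div hc (y := 1 - 4 * t ^ 2) (by nlinarith)
  exact mul_le_mul_of_nonneg_left (by linarith) (by linarith)

/- `c ≈ √(4(1 - 2t₀)/3)` maximises the integral of the minorant to leading order. -/
theorem integral_integrandMinorant :
    ∫ t in (0.4981 : ℝ)..1 / 2, integrandMinorant 0.0712 t = 283983660379 / 5340000000000000000 := by
  have hpoly (t : ℝ) : integrandMinorant 0.0712 t =
      t * (4822513 / 333750) + t ^ 2 * (2055 / 89) - t ^ 3 * (4466 / 89) - 4488763 / 667500 := by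
    unfold integrandMinorant; ring
  simp_rw [hpoly]
  rw [integral_sub, integral_sub, integral_add]
  all_goals first
    | exact Continuous.intervalIntegrable (by fun_prop) _ _
    | simp only [integral_mul_const, integral_pow, integral_id, integral_const]; norm_num

/-- the integral `∫_{0.4981}^{1/2} (1-2t)(1/3 + t - 3t² - √(1-4t²)) dt`
is positive, and `ε = 24` times it exceeds `10⁻⁶`. -/
theorem statement15 :
    0 < ∫ t in (0.4981 : ℝ)..(1 / 2 : ℝ),
        (1 - 2 * t) * (1 / 3 + t - 3 * t ^ 2 - Real.sqrt (1 - 4 * t ^ 2)) ∧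
    (1 / 1000000 : ℝ) <
      24 * ∫ t in (0.4981 : ℝ)..(1 / 2 : ℝ),
        (1 - 2 * t) * (1 / 3 + t - 3 * t ^ 2 - Real.sqrt (1 - 4 * t ^ 2)) := by
  have hbound : (283983660379 / 5340000000000000000 : ℝ) ≤ ∫ t in (0.4981 : ℝ)..(1 / 2 : ℝ),
      (1 - 2 * t) * (1 / 3 + t - 3 * t ^ 2 - Real.sqrt (1 - 4 * t ^ 2)) := by
    rw [← integral_integrandMinorant]
    exact integral_mono_on (by norm_num) ((continuous_integrandMinorant _).intervalIntegrable _ _)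
      (continuous_integrand.intervalIntegrable _ _)
      fun t ht => integrandMinorant_le_integrand (by norm_num) ⟨by linarith [ht.1], ht.2⟩
  exact ⟨by linarith, by linarith⟩
end
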